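/- arXiv:2207.11487 — 6 statements merged into one kernel-verified Lean document; each statement's English description precedes it below -/
import Mathlib

section
/- Let $0<p<1$ and let $\{X_{\mathbf{n}}, \mathbf{n} \in \mathbb{Z}^d_+\}$ be a $d$-dimensional array of random vectors taking values in a real separable Hilbert space $\mathcal{H}$. If $\{\|X_{\mathbf{n}}\|^p\}$ is uniformly integrable in the Cesàro sense, then $|\mathbf{n}|^{-1/p}\max_{\mathbf{1}\prec\mathbf{k}\prec\mathbf{n}}\|\sum_{\mathbf{i}\prec\mathbf{k}} X_{\mathbf{i}}\| \to 0$ in $L_p$ as $|\mathbf{n}|\to\infty$, i.e., $\mathbb{E}\big(|\mathbf{n}|^{-1/p}\max_{\mathbf{1}\prec\mathbf{k}\prec\mathbf{n}}\|\sum_{\mathbf{i}\prec\mathbf{k}} X_{\mathbf{i}}\|\big)^p \to 0$. No dependence structure is assumed. -/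
/-!
Everything happens pointwise, which is why no dependence structure is needed. The maximum of
the partial sums is at most `∑ ‖X_i‖`. Split each `‖X_i‖` at the level `a ^ (1/p)`: the
`|n|` small terms add up to at most `|n| a ^ (1/p)`, and by subadditivity of `t ↦ t ^ p`
(`p ≤ 1`) the large terms contribute at most `∑ ‖X_i‖ ^ p 1(‖X_i‖ ^ p > a)`. After dividing
by `|n|` this leaves `a |n| ^ (p - 1) → 0` (as `p < 1`) plus the Cesàro average of truncated
`p`-th moments, which is small for large `a` by uniform integrability.
-/

open MeasureTheory Filter Finset

namespace Real

theorem rpow_sum_le_sum_rpow {ι : Type*} {p : ℝ} (hp0 : 0 < p) (hp1 : p ≤ 1) (s : Finset ι)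
    {f : ι → ℝ} (hf : ∀ i ∈ s, 0 ≤ f i) : (∑ i ∈ s, f i) ^ p ≤ ∑ i ∈ s, f i ^ p :=
  le_sum_of_subadditive_on_pred (· ^ p) (0 ≤ ·) (by simp [zero_rpow hp0.ne'])
    (fun _ _ hx hy => rpow_add_le_add_rpow hx hy hp0.le hp1) (fun _ _ => add_nonneg) f hf

theorem sum_rpow_le_card_rpow_mul_add_sum_ite {ι : Type*} {p a : ℝ} (hp0 : 0 < p)
    (hp1 : p ≤ 1) (ha : 0 ≤ a) (s : Finset ι) {t : ι → ℝ} (ht : ∀ i ∈ s, 0 ≤ t i) :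
    (∑ i ∈ s, t i) ^ p ≤ (#s : ℝ) ^ p * a + ∑ i ∈ s, if a < t i ^ p then t i ^ p else 0 := by
  classical
  set large := s.filter fun i => a < t i ^ p
  set small := s.filter fun i => ¬a < t i ^ p
  have hsmall : ∑ i ∈ small, t i ≤ #s * a ^ (1 / p) := by
    calc ∑ i ∈ small, t i ≤ #small • a ^ (1 / p) := by
          refine sum_le_card_nsmul _ _ _ fun i hi => ?_
          obtain ⟨his, hi⟩ := mem_filter.1 hi
          rw [← rpow_le_rpow_iff (ht i his) (by positivity) hp0, ← rpow_mul ha,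
            one_div_mul_cancel hp0.ne', rpow_one]
          exact not_lt.1 hi
      _ ≤ #s * a ^ (1 / p) := by
          rw [nsmul_eq_mul]
          gcongr
          exact filter_subset _ _
  have hsmall_nonneg : 0 ≤ ∑ i ∈ small, t i := sum_nonneg fun i hi => ht i (filter_subset _ _ hi)
  have hlarge_nonneg : ∀ i ∈ large, 0 ≤ t i := fun i hi => ht i (filter_subset _ _ hi)
  rw [← sum_filter_add_sum_filter_not s (fun i => a < t i ^ p), ← sum_filter, add_comm]
  calc (∑ i ∈ small, t i + ∑ i ∈ large, t i) ^ p
      ≤ (∑ i ∈ small, t i) ^ p + (∑ i ∈ large, t i) ^ p :=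
        rpow_add_le_add_rpow hsmall_nonneg (sum_nonneg hlarge_nonneg) hp0.le hp1
    _ ≤ (#s * a ^ (1 / p)) ^ p + ∑ i ∈ large, t i ^ p := by
        gcongr
        exact rpow_sum_le_sum_rpow hp0 hp1 _ hlarge_nonneg
    _ = (#s : ℝ) ^ p * a + ∑ i ∈ large, t i ^ p := by
        rw [mul_rpow (by positivity) (by positivity), ← rpow_mul ha,
          one_div_mul_cancel hp0.ne', rpow_one]

theorem exists_nat_forall_mul_rpow_sub_one_lt {p : ℝ} (hp1 : p < 1) (a : ℝ) {ε : ℝ}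
    (hε : 0 < ε) : ∃ N : ℕ, ∀ m : ℕ, N ≤ m → a * (m : ℝ) ^ (p - 1) < ε := by
  have hlim : Tendsto (fun m : ℕ => a * (m : ℝ) ^ (p - 1)) atTop (nhds 0) := by
    have := ((tendsto_rpow_neg_atTop (sub_pos.2 hp1)).comp
      tendsto_natCast_atTop_atTop).const_mul a
    simpa only [Function.comp_def, neg_sub, mul_zero] using this
  exact eventually_atTop.1 (hlim.eventually (gt_mem_nhds hε))

end Real

section PartialSums

variable {ι E : Type*} [Preorder ι] [LocallyFiniteOrder ι] [SeminormedAddCommGroup E]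

theorem sup_nnnorm_partial_sum_le_sum_norm (x : ι → E) (l u : ι) :
    (((Icc l u).sup fun k => ‖∑ i ∈ Icc l k, x i‖₊ : NNReal) : ℝ) ≤ ∑ i ∈ Icc l u, ‖x i‖ := by
  have : ((Icc l u).sup fun k => ‖∑ i ∈ Icc l k, x i‖₊) ≤ ∑ i ∈ Icc l u, ‖x i‖₊ :=
    Finset.sup_le fun k hk => (nnnorm_sum_le _ _).trans
      (sum_le_sum_of_subset (Icc_subset_Icc_right (mem_Icc.1 hk).2))
  exact (NNReal.coe_le_coe.2 this).trans_eq (by push_cast; rfl)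

theorem rpow_sup_nnnorm_partial_sum_div_le {p a : ℝ} (hp0 : 0 < p) (hp1 : p ≤ 1) (ha : 0 ≤ a)
    (x : ι → E) {l u : ι} (hlu : l ≤ u) :
    ((((Icc l u).sup fun k => ‖∑ i ∈ Icc l k, x i‖₊ : NNReal) : ℝ) /
        (#(Icc l u) : ℝ) ^ (1 / p)) ^ p ≤
      a * (#(Icc l u) : ℝ) ^ (p - 1) +
        (1 / (#(Icc l u) : ℝ)) * ∑ i ∈ Icc l u, if a < ‖x i‖ ^ p then ‖x i‖ ^ p else 0 := by
  set m : ℝ := ((#(Icc l u) : ℕ) : ℝ)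
  have hm : 0 < m := by simpa [m] using hlu
  have hM := NNReal.coe_nonneg ((Icc l u).sup fun k => ‖∑ i ∈ Icc l k, x i‖₊)
  rw [Real.div_rpow hM (by positivity), ← Real.rpow_mul hm.le, one_div_mul_cancel hp0.ne',
    Real.rpow_one, div_le_iff₀ hm]
  calc _ ≤ (∑ i ∈ Icc l u, ‖x i‖) ^ p :=
        Real.rpow_le_rpow hM (sup_nnnorm_partial_sum_le_sum_norm x l u) hp0.le
    _ ≤ _ := Real.sum_rpow_le_card_rpow_mul_add_sum_ite hp0 hp1 ha _ fun i _ => norm_nonneg _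
    _ = _ := by rw [Real.rpow_sub_one hm.ne']; field_simp; ring

theorem integral_rpow_sup_nnnorm_partial_sum_div_le {Ω : Type*} [MeasurableSpace Ω]
    (P : Measure Ω) [IsProbabilityMeasure P] {p a : ℝ} (hp0 : 0 < p) (hp1 : p ≤ 1) (ha : 0 ≤ a)
    (X : ι → Ω → E) {l u : ι} (hlu : l ≤ u)
    (hint : ∀ i ∈ Icc l u, Integrable (fun ω => ‖X i ω‖ ^ p) P) :
    ∫ ω, ((((Icc l u).sup fun k => ‖∑ i ∈ Icc l k, X i ω‖₊ : NNReal) : ℝ) /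
        (#(Icc l u) : ℝ) ^ (1 / p)) ^ p ∂P ≤
      a * (#(Icc l u) : ℝ) ^ (p - 1) + (1 / (#(Icc l u) : ℝ)) * ∑ i ∈ Icc l u,
        ∫ ω, Set.indicator {ω | a < ‖X i ω‖ ^ p} (fun ω => ‖X i ω‖ ^ p) ω ∂P := by
  have htrunc : ∀ i ∈ Icc l u,
      Integrable (Set.indicator {ω | a < ‖X i ω‖ ^ p} fun ω => ‖X i ω‖ ^ p) P := fun i hi =>
    (hint i hi).indicator₀ (nullMeasurableSet_lt aemeasurable_const (hint i hi).aemeasurable)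
  have hbound : Integrable (fun ω => a * (#(Icc l u) : ℝ) ^ (p - 1) + (1 / (#(Icc l u) : ℝ)) *
      ∑ i ∈ Icc l u, Set.indicator {ω | a < ‖X i ω‖ ^ p} (fun ω => ‖X i ω‖ ^ p) ω) P :=
    (integrable_const _).add ((integrable_finsetSum _ htrunc).const_mul _)
  calc _ ≤ ∫ ω, (a * (#(Icc l u) : ℝ) ^ (p - 1) + (1 / (#(Icc l u) : ℝ)) *
        ∑ i ∈ Icc l u, Set.indicator {ω | a < ‖X i ω‖ ^ p} (fun ω => ‖X i ω‖ ^ p) ω) ∂P := by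
        refine integral_mono_of_nonneg (.of_forall fun ω => by positivity) hbound
          (.of_forall fun ω => ?_)
        simpa only [Set.indicator_apply, Set.mem_ofPred_eq] using
          rpow_sup_nnnorm_partial_sum_div_le hp0 hp1 ha (X · ω) hlu
    _ = _ := by
        rw [integral_add (integrable_const _) ((integrable_finsetSum _ htrunc).const_mul _),
          integral_const, integral_const_mul, integral_finsetSum _ htrunc]
        simp

end PartialSums

theorem lp_convergence_maximal_sums_zero_lt_p_lt_one_general
    {Ω H : Type*} [MeasurableSpace Ω]
    [NormedAddCommGroup H]
    (P : Measure Ω) [IsProbabilityMeasure P]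
    (d : ℕ) (p : ℝ) (hp0 : 0 < p) (hp1 : p < 1)
    (X : (Fin d → ℕ) → Ω → H)
    (hint : ∀ i, Integrable (fun ω => ‖X i ω‖ ^ p) P)
    -- Cesàro uniform integrability of {‖X_n‖^p}
    (hUI : ∀ ε > (0 : ℝ), ∃ a : ℝ, 0 < a ∧ ∀ b ≥ a, ∀ n : Fin d → ℕ, (∀ j, 1 ≤ n j) →
      (1 / ∏ j, (n j : ℝ)) * ∑ i ∈ Finset.Icc 1 n,
        ∫ ω, Set.indicator {ω | b < ‖X i ω‖ ^ p} (fun ω => ‖X i ω‖ ^ p) ω ∂P ≤ ε) :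
    -- L_p convergence as |n| → ∞
    ∀ ε > (0 : ℝ), ∃ N : ℕ, ∀ n : Fin d → ℕ, (∀ j, 1 ≤ n j) → N ≤ ∏ j, n j →
      ∫ ω, ((((Finset.Icc 1 n).sup fun k =>
          ‖∑ i ∈ Finset.Icc 1 k, X i ω‖₊ : NNReal) : ℝ) /
        (∏ j, (n j : ℝ)) ^ (1 / p)) ^ p ∂P < ε := by
  intro ε hε
  obtain ⟨a, ha, hUIa⟩ := hUI (ε / 2) (half_pos hε)
  obtain ⟨N, hN⟩ := Real.exists_nat_forall_mul_rpow_sub_one_lt hp1 a (half_pos hε)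
  refine ⟨N, fun n hn hNn => ?_⟩
  have hcard : ∏ j, n j = #(Icc 1 n) := by simp [Pi.card_Icc]
  have hcard' : ∏ j, (n j : ℝ) = #(Icc 1 n) := by rw [← hcard]; push_cast; rfl
  have htrunc := hUIa a le_rfl n hn
  rw [hcard'] at htrunc ⊢
  calc _ ≤ _ := integral_rpow_sup_nnnorm_partial_sum_div_le P hp0 hp1.le ha.le X
        (fun j => hn j : 1 ≤ n) fun i _ => hint i
    _ < ε / 2 + ε / 2 := add_lt_add_of_lt_of_le (hN _ (hcard ▸ hNn)) htrunc
    _ = ε := add_halves ε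

/-- Theorem 2.1: L_p convergence (0<p<1) of maximal normed partial sums for d-dimensional
arrays of Hilbert-space-valued random vectors whose p-th norm powers are Cesàro uniformly
integrable; no dependence assumption. -/
theorem lp_convergence_maximal_sums_zero_lt_p_lt_one
    {Ω H : Type*} [MeasurableSpace Ω]
    [NormedAddCommGroup H] [InnerProductSpace ℝ H] [CompleteSpace H]
    [SecondCountableTopology H] [MeasurableSpace H] [BorelSpace H]
    (P : Measure Ω) [IsProbabilityMeasure P]
    (d : ℕ) (hd : 0 < d) (p : ℝ) (hp0 : 0 < p) (hp1 : p < 1)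
    (X : (Fin d → ℕ) → Ω → H)
    (hmeas : ∀ i, Measurable (X i))
    (hint : ∀ i, Integrable (fun ω => ‖X i ω‖ ^ p) P)
    -- Cesàro uniform integrability of {‖X_n‖^p}
    (hUI : ∀ ε > (0 : ℝ), ∃ a : ℝ, 0 < a ∧ ∀ b ≥ a, ∀ n : Fin d → ℕ, (∀ j, 1 ≤ n j) →
      (1 / ∏ j, (n j : ℝ)) * ∑ i ∈ Finset.Icc 1 n,
        ∫ ω, Set.indicator {ω | b < ‖X i ω‖ ^ p} (fun ω => ‖X i ω‖ ^ p) ω ∂P ≤ ε) :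
    -- L_p convergence as |n| → ∞
    ∀ ε > (0 : ℝ), ∃ N : ℕ, ∀ n : Fin d → ℕ, (∀ j, 1 ≤ n j) → N ≤ ∏ j, n j →
      ∫ ω, ((((Finset.Icc 1 n).sup fun k =>
          ‖∑ i ∈ Finset.Icc 1 k, X i ω‖₊ : NNReal) : ℝ) /
        (∏ j, (n j : ℝ)) ^ (1 / p)) ^ p ∂P < ε :=
  lp_convergence_maximal_sums_zero_lt_p_lt_one_general P d p hp0 hp1 X hint hUI
end

section
/- Let $\{X_{\mathbf{n}}, \mathbf{n}\in\mathbb{Z}^d_+\}$ be a $d$-dimensional array of pairwise independent random vectors in a real separable Hilbert space $\mathcal{H}$ with mean zero ($\mathbb{E}X_{\mathbf{i}}=0$ for all $\mathbf{i}$) and finite second moments. Then there exists a constant $C>0$ (depending only on $d$) such that for all $\mathbf{n}=(n_1,\dots,n_d)$: $\mathbb{E}\big(\max_{\mathbf{1}\prec\mathbf{k}\prec\mathbf{n}}\|\sum_{\mathbf{i}\prec\mathbf{k}} X_{\mathbf{i}}\|^2\big) \le C\,\log^2(2n_1)\log^2(2n_2)\cdots\log^2(2n_d)\,\sum_{\mathbf{i}\prec\mathbf{n}}\mathbb{E}\|X_{\mathbf{i}}\|^2$.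 -/
open MeasureTheory Filter Finset ProbabilityTheory

/-!
Along the binary expansion of `k ≤ n`, the interval `[1, k]` splits into at most
`size n ≤ log₂ (2n)` blocks, one per level `j`, each empty or a dyadic interval
`(2^j m, 2^j (m + 1)]`. Taking products, the rectangle `[1, k]` splits into at most
`L = ∏ size (n c)` blocks, one per multi-level, each empty or a dyadic box inside `[1, n]`.
By Cauchy–Schwarz, `‖S_k‖²` is at most `L` times the sum of `‖S_B‖²` over all dyadic boxes
`B ⊆ [1, n]`, a bound that no longer depends on `k`. Pairwise independence and mean zero make
the `X_i` orthogonal in `L²`, so `E‖S_B‖² = ∑_{i ∈ B} E‖X_i‖²`, and since the boxes of a fixed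
multi-level are disjoint, the total is at most `L² ∑_{i ≤ n} E‖X_i‖²`.
-/

lemma Nat.findGreatest_eq_iff_of_antitone {P : ℕ → Prop} [DecidablePred P] {b j : ℕ}
    (hP : ∀ ⦃m n⦄, m ≤ n → P n → P m) (h0 : P 0) (hb : ¬P (b + 1)) :
    Nat.findGreatest P b = j ↔ P j ∧ ¬P (j + 1) := by
  rw [Nat.findGreatest_eq_iff]
  constructor
  · rintro ⟨hjb, hPj, hgt⟩
    refine ⟨(eq_or_ne j 0).elim (fun h => h ▸ h0) hPj, fun hsucc => ?_⟩
    rcases hjb.lt_or_eq with hlt | rfl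
    · exact hgt (Nat.lt_succ_self j) hlt hsucc
    · exact hb hsucc
  · rintro ⟨hj, hj1⟩
    have hjb : j ≤ b := by
      by_contra! h
      exact hb (hP h hj)
    exact ⟨hjb, fun _ => hj, fun n hn _ hPn => hj1 (hP hn hPn)⟩

def dyadicFloor (j k : ℕ) : ℕ := 2 ^ j * (k / 2 ^ j)

lemma dyadicFloor_zero (k : ℕ) : dyadicFloor 0 k = k := by simp [dyadicFloor]

lemma dyadicFloor_le (j k : ℕ) : dyadicFloor j k ≤ k := Nat.mul_div_le k (2 ^ j)

lemma dyadicFloor_succ (j k : ℕ) : dyadicFloor (j + 1) k = 2 ^ j * (2 * (k / 2 ^ j / 2)) := by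
  rw [dyadicFloor, pow_succ, ← Nat.div_div_eq_div_mul]; ring

lemma antitone_dyadicFloor (k : ℕ) : Antitone (dyadicFloor · k) := by
  refine antitone_nat_of_succ_le fun j => ?_
  rw [dyadicFloor_succ, dyadicFloor]
  exact Nat.mul_le_mul_left _ (Nat.mul_div_le _ 2)

lemma pow_le_of_le_dyadicFloor {i j k : ℕ} (hi : 0 < i) (h : i ≤ dyadicFloor j k) :
    2 ^ j ≤ k := by
  by_contra! hk
  simp [dyadicFloor, Nat.div_eq_of_lt hk] at h
  omega

/-- The level `j` of the block `(dyadicFloor (j + 1) k, dyadicFloor j k]` of `[1, k]` that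
contains `i`; the search may stop at `k` because `dyadicFloor (k + 1) k = 0`. -/
def dyadicLevel (k i : ℕ) : ℕ := Nat.findGreatest (fun j => i ≤ dyadicFloor j k) k

lemma dyadicLevel_eq_iff {k i j : ℕ} (hi : i ∈ Icc 1 k) :
    dyadicLevel k i = j ↔ i ∈ Ioc (dyadicFloor (j + 1) k) (dyadicFloor j k) := by
  rw [mem_Icc] at hi
  rw [dyadicLevel, Nat.findGreatest_eq_iff_of_antitone, mem_Ioc, not_le, and_comm]
  · exact fun m n hmn h => h.trans (antitone_dyadicFloor k hmn)
  · rw [dyadicFloor_zero]; exact hi.2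
  · intro h
    have := pow_le_of_le_dyadicFloor hi.1 h
    have := Nat.lt_two_pow_self (n := k + 1)
    omega

lemma filter_dyadicLevel_eq (k j : ℕ) :
    (Icc 1 k).filter (dyadicLevel k · = j) = Ioc (dyadicFloor (j + 1) k) (dyadicFloor j k) := by
  ext i
  rw [mem_filter]
  constructor
  · rintro ⟨hi, hij⟩
    exact (dyadicLevel_eq_iff hi).1 hij
  · intro h
    have hi : i ∈ Icc 1 k := by
      rw [mem_Ioc] at h
      exact mem_Icc.2 ⟨by omega, h.2.trans (dyadicFloor_le j k)⟩
    exact ⟨hi, (dyadicLevel_eq_iff hi).2 h⟩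

lemma dyadicLevel_lt_size {k i n : ℕ} (hi : i ∈ Icc 1 k) (hkn : k ≤ n) :
    dyadicLevel k i < n.size := by
  have h := (mem_Ioc.1 ((dyadicLevel_eq_iff hi).1 rfl)).2
  exact Nat.lt_size.2 ((pow_le_of_le_dyadicFloor (mem_Icc.1 hi).1 h).trans hkn)

lemma Ioc_dyadicFloor_eq_empty_or (j k : ℕ) :
    Ioc (dyadicFloor (j + 1) k) (dyadicFloor j k) = ∅ ∨
      ∃ m < k / 2 ^ j,
        Ioc (dyadicFloor (j + 1) k) (dyadicFloor j k) = Ioc (2 ^ j * m) (2 ^ j * (m + 1)) := by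
  rw [dyadicFloor_succ, dyadicFloor]
  obtain ⟨r, hr | hr⟩ := Nat.even_or_odd' (k / 2 ^ j)
  · left
    rw [hr, Nat.mul_div_cancel_left r two_pos, Ioc_self]
  · right
    refine ⟨2 * r, by omega, ?_⟩
    rw [hr, Nat.mul_add_div two_pos, Nat.div_eq_of_lt one_lt_two, add_zero]

lemma sub_one_div_two_pow_eq_of_mem_Ioc {i j m : ℕ}
    (hi : i ∈ Ioc (2 ^ j * m) (2 ^ j * (m + 1))) :
    (i - 1) / 2 ^ j = m := by
  rw [mem_Ioc, mul_add_one] at hi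
  have hsucc : (m + 1) * 2 ^ j = 2 ^ j * m + 2 ^ j := by ring
  apply Nat.div_eq_of_lt_le
  · rw [mul_comm]; omega
  · rw [hsucc]; omega

lemma size_mul_log_two_le (n : ℕ) : n.size * Real.log 2 ≤ Real.log (2 * n) := by
  rcases n.eq_zero_or_pos with rfl | hn
  · simp
  have hpow : 2 ^ n.size ≤ 2 * n := by
    have := Nat.lt_size.1 (Nat.sub_one_lt (Nat.size_pos.2 hn).ne')
    rw [← Nat.sub_one_add_one (Nat.size_pos.2 hn).ne', pow_succ]
    omega
  rw [← Real.log_pow]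
  exact Real.log_le_log (by positivity) (by exact_mod_cast hpow)

section Boxes

variable {ι : Type*} [Fintype ι] [DecidableEq ι]

def dyadicBox (j m : ι → ℕ) : Finset (ι → ℕ) :=
  Fintype.piFinset fun c => Ioc (2 ^ j c * m c) (2 ^ j c * (m c + 1))

def dyadicBoxIndices (n j : ι → ℕ) : Finset (ι → ℕ) :=
  Fintype.piFinset fun c => range (n c / 2 ^ j c)

def dyadicLevels (n : ι → ℕ) : Finset (ι → ℕ) :=
  Fintype.piFinset fun c => range (n c).size

lemma pairwiseDisjoint_dyadicBox (j : ι → ℕ) (s : Set (ι → ℕ)) :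
    s.PairwiseDisjoint (dyadicBox j) := by
  intro m _ m' _ hne
  refine disjoint_left.2 fun i hi hi' => hne (funext fun c => ?_)
  rw [dyadicBox, Fintype.mem_piFinset] at hi hi'
  rw [← sub_one_div_two_pow_eq_of_mem_Ioc (hi c), sub_one_div_two_pow_eq_of_mem_Ioc (hi' c)]

lemma dyadicBox_subset_Icc {n j m : ι → ℕ} (hm : m ∈ dyadicBoxIndices n j) :
    dyadicBox j m ⊆ Icc 1 n := by
  intro i hi
  rw [dyadicBox, Fintype.mem_piFinset] at hi
  rw [dyadicBoxIndices, Fintype.mem_piFinset] at hm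
  rw [Pi.Icc_eq, Fintype.mem_piFinset]
  intro c
  have hic := mem_Ioc.1 (hi c)
  have hmc := (Nat.le_div_iff_mul_le (Nat.two_pow_pos (j c))).1 (mem_range.1 (hm c))
  rw [mul_comm] at hmc
  exact mem_Icc.2 ⟨by rw [Pi.one_apply]; omega, hic.2.trans hmc⟩

lemma sum_sum_dyadicBox_le (n j : ι → ℕ) {e : (ι → ℕ) → ℝ} (he : ∀ i, 0 ≤ e i) :
    ∑ m ∈ dyadicBoxIndices n j, ∑ i ∈ dyadicBox j m, e i ≤ ∑ i ∈ Icc 1 n, e i := by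
  rw [← sum_biUnion (pairwiseDisjoint_dyadicBox j _)]
  exact sum_le_sum_of_subset_of_nonneg (biUnion_subset.2 fun m hm => dyadicBox_subset_Icc hm)
    fun i _ _ => he i

lemma filter_Icc_dyadicLevel_eq (k j : ι → ℕ) :
    (Icc 1 k).filter (fun i => (fun c => dyadicLevel (k c) (i c)) = j) =
      Fintype.piFinset fun c => Ioc (dyadicFloor (j c + 1) (k c)) (dyadicFloor (j c) (k c)) := by
  ext i
  simp only [mem_filter, Pi.Icc_eq, Fintype.mem_piFinset, Pi.one_apply, funext_iff,
    ← forall_and, ← filter_dyadicLevel_eq]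

lemma norm_sq_sum_filter_dyadicLevel_le {E : Type*} [SeminormedAddCommGroup E] {n k : ι → ℕ}
    (hkn : k ≤ n) (j : ι → ℕ) (v : (ι → ℕ) → E) :
    ‖∑ i ∈ (Icc 1 k).filter (fun i => (fun c => dyadicLevel (k c) (i c)) = j), v i‖ ^ 2 ≤
      ∑ m ∈ dyadicBoxIndices n j, ‖∑ i ∈ dyadicBox j m, v i‖ ^ 2 := by
  rw [filter_Icc_dyadicLevel_eq]
  by_cases hempty : ∃ c, Ioc (dyadicFloor (j c + 1) (k c)) (dyadicFloor (j c) (k c)) = ∅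
  · rw [Fintype.piFinset_eq_empty.2 hempty, sum_empty, norm_zero, sq, zero_mul]
    exact sum_nonneg fun m _ => sq_nonneg _
  simp only [not_exists] at hempty
  choose m hmk hm using fun c =>
    (Ioc_dyadicFloor_eq_empty_or (j c) (k c)).resolve_left (hempty c)
  have hmem : m ∈ dyadicBoxIndices n j := by
    rw [dyadicBoxIndices, Fintype.mem_piFinset]
    exact fun c => mem_range.2 ((hmk c).trans_le (Nat.div_le_div_right (hkn c)))
  rw [show (Fintype.piFinset fun c => _) = dyadicBox j m from congrArg _ (funext hm)]
  exact single_le_sum (f := fun m => ‖∑ i ∈ dyadicBox j m, v i‖ ^ 2)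
    (fun _ _ => sq_nonneg _) hmem

lemma norm_sq_sum_Icc_le {E : Type*} [SeminormedAddCommGroup E] {n k : ι → ℕ}
    (hkn : k ≤ n) (v : (ι → ℕ) → E) :
    ‖∑ i ∈ Icc 1 k, v i‖ ^ 2 ≤
      #(dyadicLevels n) * ∑ j ∈ dyadicLevels n, ∑ m ∈ dyadicBoxIndices n j,
        ‖∑ i ∈ dyadicBox j m, v i‖ ^ 2 := by
  have hmaps : ∀ i ∈ Icc 1 k, (fun c => dyadicLevel (k c) (i c)) ∈ dyadicLevels n := by
    intro i hi
    rw [Pi.Icc_eq, Fintype.mem_piFinset] at hi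
    rw [dyadicLevels, Fintype.mem_piFinset]
    exact fun c => mem_range.2 (dyadicLevel_lt_size (hi c) (hkn c))
  rw [← sum_fiberwise_of_maps_to hmaps]
  calc _ ≤ (∑ j ∈ dyadicLevels n,
          ‖∑ i ∈ (Icc 1 k).filter fun i => (fun c => dyadicLevel (k c) (i c)) = j, v i‖) ^ 2 :=
        pow_le_pow_left₀ (norm_nonneg _) (norm_sum_le _ _) 2
    _ ≤ #(dyadicLevels n) * ∑ j ∈ dyadicLevels n,
          ‖∑ i ∈ (Icc 1 k).filter fun i => (fun c => dyadicLevel (k c) (i c)) = j, v i‖ ^ 2 :=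
        sq_sum_le_card_mul_sum_sq
    _ ≤ _ := by
        gcongr with j
        exact norm_sq_sum_filter_dyadicLevel_le hkn j v

lemma card_dyadicLevels_sq_le (n : ι → ℕ) :
    (#(dyadicLevels n) : ℝ) ^ 2 ≤
      (Real.log 2 ^ 2)⁻¹ ^ Fintype.card ι * ∏ c, Real.log (2 * n c) ^ 2 := by
  have hlog2 : 0 < Real.log 2 ^ 2 := by positivity
  rw [dyadicLevels, Fintype.card_piFinset, ← card_univ, ← prod_const, ← prod_mul_distrib]
  push_cast
  rw [← prod_pow]
  refine prod_le_prod (fun c _ => by positivity) fun c _ => ?_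
  rw [inv_mul_eq_div, le_div_iff₀ hlog2, card_range, ← mul_pow]
  exact pow_le_pow_left₀ (by positivity) (size_mul_log_two_le (n c)) 2

end Boxes

lemma coe_sup_sq_le {κ : Type*} (s : Finset κ) (f : κ → NNReal) {a : ℝ} (ha : 0 ≤ a)
    (h : ∀ k ∈ s, (f k : ℝ) ^ 2 ≤ a) : ((s.sup f : NNReal) : ℝ) ^ 2 ≤ a := by
  rcases s.eq_empty_or_nonempty with rfl | hs
  · simpa using ha
  obtain ⟨k, hk, hsup⟩ := exists_mem_eq_sup s hs f
  exact hsup ▸ h k hk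

section Probability

variable {Ω H : Type*} [MeasurableSpace Ω]
  [NormedAddCommGroup H] [InnerProductSpace ℝ H] [CompleteSpace H]
  [MeasurableSpace H] [BorelSpace H] {P : Measure Ω} [IsProbabilityMeasure P]

lemma integral_norm_sq_sum_eq {κ : Type*} (s : Finset κ) {X : κ → Ω → H}
    (hX : ∀ i, MemLp (X i) 2 P) (h0 : ∀ i, ∫ ω, X i ω ∂P = 0)
    (hind : ∀ i j, i ≠ j → IndepFun (X i) (X j) P) :
    ∫ ω, ‖∑ i ∈ s, X i ω‖ ^ 2 ∂P = ∑ i ∈ s, ∫ ω, ‖X i ω‖ ^ 2 ∂P := by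
  have hint : ∀ i, Integrable (X i) P := fun i => (hX i).integrable one_le_two
  have hsq : ∀ i, Integrable (fun ω => ‖X i ω‖ ^ 2) P := fun i =>
    (memLp_two_iff_integrable_sq_norm (hX i).1).1 (hX i)
  have hinner : ∀ i j, Integrable (fun ω => inner ℝ (X i ω) (X j ω)) P := by
    intro i j
    rcases eq_or_ne i j with rfl | hij
    · simpa only [real_inner_self_eq_norm_sq] using hsq i
    · exact (hind i j hij).integrable_bilin (hint i) (hint j) (innerSL ℝ)
  have horth : ∀ i j, i ≠ j → ∫ ω, inner ℝ (X i ω) (X j ω) ∂P = 0 := fun i j hij => by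
    have h := (hind i j hij).integral_bilin (hint i) (hint j) (innerSL ℝ)
    rwa [h0 j, map_zero] at h
  simp_rw [← real_inner_self_eq_norm_sq, sum_inner, inner_sum]
  rw [integral_finsetSum _ fun i _ => integrable_finsetSum _ fun j _ => hinner i j]
  refine sum_congr rfl fun i hi => ?_
  rw [integral_finsetSum _ fun j _ => hinner i j, sum_eq_single i
    (fun j _ hji => horth i j hji.symm) (fun h => absurd hi h)]

variable {ι : Type*} [Fintype ι] [DecidableEq ι]

theorem integral_sup_norm_sum_Icc_sq_le {X : (ι → ℕ) → Ω → H}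
    (hX : ∀ i, MemLp (X i) 2 P) (h0 : ∀ i, ∫ ω, X i ω ∂P = 0)
    (hind : ∀ i j, i ≠ j → IndepFun (X i) (X j) P) (n : ι → ℕ) :
    ∫ ω, (((Icc 1 n).sup fun k => ‖∑ i ∈ Icc 1 k, X i ω‖₊ : NNReal) : ℝ) ^ 2 ∂P ≤
      #(dyadicLevels n) ^ 2 * ∑ i ∈ Icc 1 n, ∫ ω, ‖X i ω‖ ^ 2 ∂P := by
  set L : ℝ := (#(dyadicLevels n) : ℝ)
  have hsq : ∀ s : Finset (ι → ℕ), Integrable (fun ω => ‖∑ i ∈ s, X i ω‖ ^ 2) P := fun s =>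
    (memLp_two_iff_integrable_sq_norm (memLp_finsetSum s fun i _ => hX i).1).1
      (memLp_finsetSum s fun i _ => hX i)
  have hG : Integrable (fun ω => L * ∑ j ∈ dyadicLevels n, ∑ m ∈ dyadicBoxIndices n j,
      ‖∑ i ∈ dyadicBox j m, X i ω‖ ^ 2) P :=
    (integrable_finsetSum _ fun j _ => integrable_finsetSum _ fun m _ => hsq _).const_mul L
  calc _ ≤ ∫ ω, L * ∑ j ∈ dyadicLevels n, ∑ m ∈ dyadicBoxIndices n j,
          ‖∑ i ∈ dyadicBox j m, X i ω‖ ^ 2 ∂P := by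
        refine integral_mono_of_nonneg (ae_of_all _ fun ω => by positivity) hG
          (ae_of_all _ fun ω => coe_sup_sq_le _ _ (by positivity) fun k hk => ?_)
        exact norm_sq_sum_Icc_le (mem_Icc.1 hk).2 _
    _ = L * ∑ j ∈ dyadicLevels n, ∑ m ∈ dyadicBoxIndices n j,
          ∑ i ∈ dyadicBox j m, ∫ ω, ‖X i ω‖ ^ 2 ∂P := by
        rw [integral_const_mul, integral_finsetSum _ fun j _ =>
          integrable_finsetSum _ fun m _ => hsq _]
        simp_rw [integral_finsetSum _ fun m _ => hsq _, integral_norm_sq_sum_eq _ hX h0 hind]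
    _ ≤ L * ∑ j ∈ dyadicLevels n, ∑ i ∈ Icc 1 n, ∫ ω, ‖X i ω‖ ^ 2 ∂P := by
        gcongr with j
        exact sum_sum_dyadicBox_le n j fun i => integral_nonneg fun ω => sq_nonneg _
    _ = L ^ 2 * ∑ i ∈ Icc 1 n, ∫ ω, ‖X i ω‖ ^ 2 ∂P := by
        rw [sum_const, nsmul_eq_mul]; ring

end Probability

theorem maximal_inequality_d_dim_general
    {Ω H : Type*} [MeasurableSpace Ω]
    [NormedAddCommGroup H] [InnerProductSpace ℝ H] [CompleteSpace H]
    [SecondCountableTopology H] [MeasurableSpace H] [BorelSpace H]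
    (P : Measure Ω) [IsProbabilityMeasure P] (d : ℕ) :
    ∃ C > (0 : ℝ), ∀ X : (Fin d → ℕ) → Ω → H,
      (∀ i, Measurable (X i)) →
      (∀ i, Integrable (fun ω => ‖X i ω‖ ^ 2) P) →
      (∀ i, ∫ ω, X i ω ∂P = 0) →
      (∀ i j, i ≠ j → IndepFun (X i) (X j) P) →
      ∀ n : Fin d → ℕ,
        ∫ ω, ((((Finset.Icc 1 n).sup fun k =>
            ‖∑ i ∈ Finset.Icc 1 k, X i ω‖₊ : NNReal) : ℝ)) ^ 2 ∂P ≤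
          C * (∏ j, Real.log (2 * n j) ^ 2) *
            ∑ i ∈ Finset.Icc 1 n, ∫ ω, ‖X i ω‖ ^ 2 ∂P := by
  refine ⟨(Real.log 2 ^ 2)⁻¹ ^ d, by positivity, fun X hm h2 h0 hind n => ?_⟩
  have hX : ∀ i, MemLp (X i) 2 P := fun i =>
    (memLp_two_iff_integrable_sq_norm (hm i).aestronglyMeasurable).2 (h2 i)
  calc _ ≤ #(dyadicLevels n) ^ 2 * ∑ i ∈ Icc 1 n, ∫ ω, ‖X i ω‖ ^ 2 ∂P :=
        integral_sup_norm_sum_Icc_sq_le hX h0 hind n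
    _ ≤ _ := by
        gcongr
        simpa using card_dyadicLevels_sq_le n

/-- Lemma 2.4: d-dimensional Rademacher–Menshov / Móricz type maximal inequality for
pairwise independent mean-zero Hilbert-space-valued random vectors. -/
theorem maximal_inequality_d_dim
    {Ω H : Type*} [MeasurableSpace Ω]
    [NormedAddCommGroup H] [InnerProductSpace ℝ H] [CompleteSpace H]
    [SecondCountableTopology H] [MeasurableSpace H] [BorelSpace H]
    (P : Measure Ω) [IsProbabilityMeasure P] (d : ℕ) (hd : 0 < d) :
    ∃ C > (0 : ℝ), ∀ X : (Fin d → ℕ) → Ω → H,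
      (∀ i, Measurable (X i)) →
      (∀ i, Integrable (fun ω => ‖X i ω‖ ^ 2) P) →
      (∀ i, ∫ ω, X i ω ∂P = 0) →
      (∀ i j, i ≠ j → IndepFun (X i) (X j) P) →
      ∀ n : Fin d → ℕ,
        ∫ ω, ((((Finset.Icc 1 n).sup fun k =>
            ‖∑ i ∈ Finset.Icc 1 k, X i ω‖₊ : NNReal) : ℝ)) ^ 2 ∂P ≤
          C * (∏ j, Real.log (2 * n j) ^ 2) *
            ∑ i ∈ Finset.Icc 1 n, ∫ ω, ‖X i ω‖ ^ 2 ∂P :=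
  maximal_inequality_d_dim_general P d
end

section
/- A $d$-dimensional array of real-valued random variables $\{X_{\mathbf{n}}, \mathbf{n}\in\mathbb{Z}^d_+\}$ is uniformly integrable in the Cesàro sense if and only if (i) $\sup_{\mathbf{n}\succ\mathbf{1}}|\mathbf{n}|^{-1}\sum_{\mathbf{i}\prec\mathbf{n}}\mathbb{E}|X_{\mathbf{i}}| < \infty$, and (ii) for every $\varepsilon>0$ there exists $\delta>0$ such that for every array of events $\{A_{\mathbf{n}}\}$ with $\sup_{\mathbf{n}\succ\mathbf{1}}|\mathbf{n}|^{-1}\sum_{\mathbf{i}\prec\mathbf{n}}\mathbb{P}(A_{\mathbf{i}})<\delta$, one has $\sup_{\mathbf{n}\succ\mathbf{1}}|\mathbf{n}|^{-1}\sum_{\mathbf{i}\prec\mathbf{n}}\mathbb{E}(|X_{\mathbf{i}}|\mathbf{1}(A_{\mathbf{i}}))<\varepsilon$. -/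
/-!
Averaging the pointwise bound `|X| 1_A ≤ a 1_A + |X| 1_{|X| > a}` over the box `[1, n]` gives both
conditions from Cesàro uniform integrability: (ii) with `δ = ε / (2a)` for `a` chosen for `ε / 2`,
and (i) by taking `A = Ω`. Conversely, Markov's inequality and (i) bound the Cesàro average of
`P(|X_i| > b)` by `M / b`, which is below `δ` for large `b`; (ii) applied to the events
`{|X_i| > b}` then controls the tails.
-/

open MeasureTheory Finset

section CesaroAverage

variable {ι : Type*} [Fintype ι] [DecidableEq ι]

noncomputable def cesaroAvg (f : (ι → ℕ) → ℝ) (n : ι → ℕ) : ℝ :=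
  (1 / ∏ j, (n j : ℝ)) * ∑ i ∈ Icc 1 n, f i

variable {f g : (ι → ℕ) → ℝ} {n : ι → ℕ}

lemma cesaroAvg_mono (h : ∀ i, f i ≤ g i) : cesaroAvg f n ≤ cesaroAvg g n :=
  mul_le_mul_of_nonneg_left (sum_le_sum fun i _ => h i) (by positivity)

lemma cesaroAvg_add : cesaroAvg (fun i => f i + g i) n = cesaroAvg f n + cesaroAvg g n := by
  simp only [cesaroAvg, sum_add_distrib, mul_add]

lemma cesaroAvg_const_mul (c : ℝ) : cesaroAvg (fun i => c * f i) n = c * cesaroAvg f n := by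
  simp only [cesaroAvg, ← mul_sum]
  ring

lemma card_Icc_one_pi (n : ι → ℕ) : ((Icc 1 n).card : ℝ) = ∏ j, (n j : ℝ) := by
  simp [Pi.card_Icc, Nat.card_Icc]

lemma cesaroAvg_const (hn : ∀ j, 1 ≤ n j) (c : ℝ) : cesaroAvg (fun _ => c) n = c := by
  have hpos : (0 : ℝ) < ∏ j, (n j : ℝ) := prod_pos fun j _ => by exact_mod_cast hn j
  rw [cesaroAvg, sum_const, nsmul_eq_mul, card_Icc_one_pi]
  field_simp

end CesaroAverage

section Tail

variable {Ω : Type*} {f : Ω → ℝ} {a : ℝ}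

lemma indicator_abs_le_mul_indicator_add_tail (ha : 0 ≤ a) (A : Set Ω) (ω : Ω) :
    A.indicator (fun ω => |f ω|) ω ≤
      a * A.indicator 1 ω + {ω | a < |f ω|}.indicator (fun ω => |f ω|) ω := by
  by_cases hA : ω ∈ A <;> by_cases h : a < |f ω| <;> simp [hA, h] <;> linarith [abs_nonneg (f ω)]

variable [MeasurableSpace Ω] {μ : Measure Ω}

lemma integral_indicator_abs_le [IsFiniteMeasure μ] (hfm : Measurable f) (hf : Integrable f μ)
    (ha : 0 ≤ a) {A : Set Ω} (hA : MeasurableSet A) :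
    ∫ ω, A.indicator (fun ω => |f ω|) ω ∂μ ≤
      a * (μ A).toReal + ∫ ω, {ω | a < |f ω|}.indicator (fun ω => |f ω|) ω ∂μ := by
  have hset : Integrable (fun ω => a * A.indicator 1 ω) μ :=
    ((integrable_const (1 : ℝ)).indicator hA).const_mul a
  have htail : Integrable (fun ω => {ω | a < |f ω|}.indicator (fun ω => |f ω|) ω) μ :=
    hf.abs.indicator (measurableSet_lt measurable_const hfm.abs)
  calc ∫ ω, A.indicator (fun ω => |f ω|) ω ∂μ
      ≤ ∫ ω, (a * A.indicator 1 ω + {ω | a < |f ω|}.indicator (fun ω => |f ω|) ω) ∂μ :=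
        integral_mono (hf.abs.indicator hA) (hset.add htail)
          (indicator_abs_le_mul_indicator_add_tail ha A)
    _ = _ := by
        rw [integral_add hset htail, integral_const_mul, integral_indicator_one hA, measureReal_def]

lemma integral_abs_le_add_tail [IsProbabilityMeasure μ] (hfm : Measurable f)
    (hf : Integrable f μ) (ha : 0 ≤ a) :
    ∫ ω, |f ω| ∂μ ≤ a + ∫ ω, {ω | a < |f ω|}.indicator (fun ω => |f ω|) ω ∂μ := by
  simpa using integral_indicator_abs_le hfm hf ha (μ := μ) MeasurableSet.univ

lemma mul_measure_abs_gt_le_integral_abs [IsFiniteMeasure μ] (hf : Integrable f μ) (a : ℝ) :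
    a * (μ {ω | a < |f ω|}).toReal ≤ ∫ ω, |f ω| ∂μ := by
  rcases le_or_gt a 0 with ha | ha
  · exact (mul_nonpos_of_nonpos_of_nonneg ha ENNReal.toReal_nonneg).trans
      (integral_nonneg fun _ => abs_nonneg _)
  calc a * (μ {ω | a < |f ω|}).toReal ≤ a * μ.real {ω | a ≤ |f ω|} :=
        mul_le_mul_of_nonneg_left (measureReal_mono fun ω (h : a < |f ω|) => h.le) ha.le
    _ ≤ ∫ ω, |f ω| ∂μ :=
        mul_meas_ge_le_integral_of_nonneg (ae_of_all _ fun _ => abs_nonneg _) hf.abs a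

end Tail

section CesaroUnifIntegrable

variable {ι Ω : Type*} [Fintype ι] [DecidableEq ι] [MeasurableSpace Ω]

def CesaroUnifIntegrable (μ : Measure Ω) (X : (ι → ℕ) → Ω → ℝ) : Prop :=
  ∀ ε > (0 : ℝ), ∃ a : ℝ, 0 < a ∧ ∀ b ≥ a, ∀ n : ι → ℕ, (∀ j, 1 ≤ n j) →
    cesaroAvg (fun i => ∫ ω, {ω | b < |X i ω|}.indicator (fun ω => |X i ω|) ω ∂μ) n ≤ ε

def CesaroBoundedL1 (μ : Measure Ω) (X : (ι → ℕ) → Ω → ℝ) : Prop :=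
  ∃ M : ℝ, ∀ n : ι → ℕ, (∀ j, 1 ≤ n j) → cesaroAvg (fun i => ∫ ω, |X i ω| ∂μ) n ≤ M

def CesaroUnifAbsCont (μ : Measure Ω) (X : (ι → ℕ) → Ω → ℝ) : Prop :=
  ∀ ε > (0 : ℝ), ∃ δ > (0 : ℝ), ∀ A : (ι → ℕ) → Set Ω, (∀ i, MeasurableSet (A i)) →
    (∀ n : ι → ℕ, (∀ j, 1 ≤ n j) → cesaroAvg (fun i => (μ (A i)).toReal) n < δ) →
    ∀ n : ι → ℕ, (∀ j, 1 ≤ n j) →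
      cesaroAvg (fun i => ∫ ω, (A i).indicator (fun ω => |X i ω|) ω ∂μ) n < ε

variable {μ : Measure Ω} {X : (ι → ℕ) → Ω → ℝ}

theorem CesaroUnifIntegrable.cesaroBoundedL1 [IsProbabilityMeasure μ]
    (hmeas : ∀ i, Measurable (X i)) (hint : ∀ i, Integrable (X i) μ)
    (h : CesaroUnifIntegrable μ X) : CesaroBoundedL1 μ X := by
  obtain ⟨a, ha, hUI⟩ := h 1 one_pos
  refine ⟨a + 1, fun n hn => ?_⟩
  calc cesaroAvg (fun i => ∫ ω, |X i ω| ∂μ) n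
      ≤ cesaroAvg (fun i => a + ∫ ω, {ω | a < |X i ω|}.indicator (fun ω => |X i ω|) ω ∂μ) n :=
        cesaroAvg_mono fun i => integral_abs_le_add_tail (hmeas i) (hint i) ha.le
    _ ≤ a + 1 := by
        rw [cesaroAvg_add, cesaroAvg_const hn]
        linarith [hUI a le_rfl n hn]

theorem CesaroUnifIntegrable.cesaroUnifAbsCont [IsFiniteMeasure μ]
    (hmeas : ∀ i, Measurable (X i)) (hint : ∀ i, Integrable (X i) μ)
    (h : CesaroUnifIntegrable μ X) : CesaroUnifAbsCont μ X := by
  intro ε hε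
  obtain ⟨a, ha, hUI⟩ := h (ε / 2) (half_pos hε)
  refine ⟨ε / (2 * a), by positivity, fun A hA hsmall n hn => ?_⟩
  calc cesaroAvg (fun i => ∫ ω, (A i).indicator (fun ω => |X i ω|) ω ∂μ) n
      ≤ cesaroAvg (fun i => a * (μ (A i)).toReal +
          ∫ ω, {ω | a < |X i ω|}.indicator (fun ω => |X i ω|) ω ∂μ) n :=
        cesaroAvg_mono fun i => integral_indicator_abs_le (hmeas i) (hint i) ha.le (hA i)
    _ < a * (ε / (2 * a)) + ε / 2 := by
        rw [cesaroAvg_add, cesaroAvg_const_mul]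
        exact add_lt_add_of_lt_of_le (mul_lt_mul_of_pos_left (hsmall n hn) ha) (hUI a le_rfl n hn)
    _ = ε := by field_simp; ring

theorem CesaroBoundedL1.cesaroUnifIntegrable [IsFiniteMeasure μ]
    (hmeas : ∀ i, Measurable (X i)) (hint : ∀ i, Integrable (X i) μ)
    (hL1 : CesaroBoundedL1 μ X) (hUAC : CesaroUnifAbsCont μ X) : CesaroUnifIntegrable μ X := by
  obtain ⟨M, hM⟩ := hL1
  intro ε hε
  obtain ⟨δ, hδ, hA⟩ := hUAC ε hε
  refine ⟨|M| / δ + 1, by positivity, fun b hba n hn => ?_⟩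
  have hb : 0 < b := lt_of_lt_of_le (by positivity) hba
  have hMb : M < b * δ := by
    have := mul_le_mul_of_nonneg_right hba hδ.le
    rw [add_mul, div_mul_cancel₀ _ hδ.ne'] at this
    linarith [le_abs_self M]
  have hsmall : ∀ m : ι → ℕ, (∀ j, 1 ≤ m j) →
      cesaroAvg (fun i => (μ {ω | b < |X i ω|}).toReal) m < δ := by
    intro m hm
    refine lt_of_mul_lt_mul_left ?_ hb.le
    calc b * cesaroAvg (fun i => (μ {ω | b < |X i ω|}).toReal) m
        ≤ cesaroAvg (fun i => ∫ ω, |X i ω| ∂μ) m := by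
          rw [← cesaroAvg_const_mul]
          exact cesaroAvg_mono fun i => mul_measure_abs_gt_le_integral_abs (hint i) b
      _ ≤ M := hM m hm
      _ < b * δ := hMb
  exact (hA (fun i => {ω | b < |X i ω|})
    (fun i => measurableSet_lt measurable_const (hmeas i).abs) hsmall n hn).le

theorem cesaroUnifIntegrable_iff [IsProbabilityMeasure μ]
    (hmeas : ∀ i, Measurable (X i)) (hint : ∀ i, Integrable (X i) μ) :
    CesaroUnifIntegrable μ X ↔ CesaroBoundedL1 μ X ∧ CesaroUnifAbsCont μ X :=
  ⟨fun h => ⟨h.cesaroBoundedL1 hmeas hint, h.cesaroUnifAbsCont hmeas hint⟩,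
    fun h => h.1.cesaroUnifIntegrable hmeas hint h.2⟩

end CesaroUnifIntegrable

theorem cesaro_ui_criterion_general
    {Ω : Type*} [MeasurableSpace Ω]
    (P : Measure Ω) [IsProbabilityMeasure P]
    (d : ℕ)
    (X : (Fin d → ℕ) → Ω → ℝ)
    (hmeas : ∀ i, Measurable (X i))
    (hint : ∀ i, Integrable (X i) P) :
    -- Cesàro uniform integrability
    (∀ ε > (0 : ℝ), ∃ a : ℝ, 0 < a ∧ ∀ b ≥ a, ∀ n : Fin d → ℕ, (∀ j, 1 ≤ n j) →
        (1 / ∏ j, (n j : ℝ)) * ∑ i ∈ Finset.Icc 1 n,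
          ∫ ω, Set.indicator {ω | b < |X i ω|} (fun ω => |X i ω|) ω ∂P ≤ ε)
    ↔
    -- (i) Cesàro boundedness in L¹
    ((∃ M : ℝ, ∀ n : Fin d → ℕ, (∀ j, 1 ≤ n j) →
        (1 / ∏ j, (n j : ℝ)) * ∑ i ∈ Finset.Icc 1 n, ∫ ω, |X i ω| ∂P ≤ M) ∧
    -- (ii) uniform absolute continuity in the Cesàro sense
      (∀ ε > (0 : ℝ), ∃ δ > (0 : ℝ), ∀ A : (Fin d → ℕ) → Set Ω,
        (∀ i, MeasurableSet (A i)) →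
        (∀ n : Fin d → ℕ, (∀ j, 1 ≤ n j) →
          (1 / ∏ j, (n j : ℝ)) * ∑ i ∈ Finset.Icc 1 n, (P (A i)).toReal < δ) →
        ∀ n : Fin d → ℕ, (∀ j, 1 ≤ n j) →
          (1 / ∏ j, (n j : ℝ)) * ∑ i ∈ Finset.Icc 1 n,
            ∫ ω, Set.indicator (A i) (fun ω => |X i ω|) ω ∂P < ε)) :=
  cesaroUnifIntegrable_iff hmeas hint

/-- Theorem 3.1: criterion for Cesàro uniform integrability of a d-dimensional array of
real random variables. -/
theorem cesaro_ui_criterion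
    {Ω : Type*} [MeasurableSpace Ω]
    (P : Measure Ω) [IsProbabilityMeasure P]
    (d : ℕ) (hd : 0 < d)
    (X : (Fin d → ℕ) → Ω → ℝ)
    (hmeas : ∀ i, Measurable (X i))
    (hint : ∀ i, Integrable (X i) P) :
    -- Cesàro uniform integrability
    (∀ ε > (0 : ℝ), ∃ a : ℝ, 0 < a ∧ ∀ b ≥ a, ∀ n : Fin d → ℕ, (∀ j, 1 ≤ n j) →
        (1 / ∏ j, (n j : ℝ)) * ∑ i ∈ Finset.Icc 1 n,
          ∫ ω, Set.indicator {ω | b < |X i ω|} (fun ω => |X i ω|) ω ∂P ≤ ε)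
    ↔
    -- (i) Cesàro boundedness in L¹
    ((∃ M : ℝ, ∀ n : Fin d → ℕ, (∀ j, 1 ≤ n j) →
        (1 / ∏ j, (n j : ℝ)) * ∑ i ∈ Finset.Icc 1 n, ∫ ω, |X i ω| ∂P ≤ M) ∧
    -- (ii) uniform absolute continuity in the Cesàro sense
      (∀ ε > (0 : ℝ), ∃ δ > (0 : ℝ), ∀ A : (Fin d → ℕ) → Set Ω,
        (∀ i, MeasurableSet (A i)) →
        (∀ n : Fin d → ℕ, (∀ j, 1 ≤ n j) →
          (1 / ∏ j, (n j : ℝ)) * ∑ i ∈ Finset.Icc 1 n, (P (A i)).toReal < δ) →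
        ∀ n : Fin d → ℕ, (∀ j, 1 ≤ n j) →
          (1 / ∏ j, (n j : ℝ)) * ∑ i ∈ Finset.Icc 1 n,
            ∫ ω, Set.indicator (A i) (fun ω => |X i ω|) ω ∂P < ε)) :=
  cesaro_ui_criterion_general P d X hmeas hint
end

section
/- (De La Vallée Poussin, sufficiency, for $d$-dimensional arrays.) Let $\{X_{\mathbf{n}}, \mathbf{n}\in\mathbb{Z}^d_+\}$ be a $d$-dimensional array of real random variables. Suppose there exists a measurable function $\phi:[0,\infty)\to[0,\infty)$ with $\phi(0)=0$, $\phi(t)/t\to\infty$ as $t\to\infty$, and $\sup_{\mathbf{n}\succ\mathbf{1}}|\mathbf{n}|^{-1}\sum_{\mathbf{i}\prec\mathbf{n}}\mathbb{E}(\phi(|X_{\mathbf{i}}|))<\infty$. Then $\{X_{\mathbf{n}}\}$ is uniformly integrable in the Cesàro sense. -/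
open MeasureTheory Filter Finset

/-- Theorem 3.2 (i): de La Vallée Poussin sufficiency for Cesàro uniform integrability of
d-dimensional arrays. -/
theorem de_la_vallee_poussin_sufficiency
    {Ω : Type*} [MeasurableSpace Ω]
    (P : Measure Ω) [IsProbabilityMeasure P]
    (d : ℕ) (hd : 0 < d)
    (X : (Fin d → ℕ) → Ω → ℝ)
    (hmeas : ∀ i, Measurable (X i))
    (hint : ∀ i, Integrable (X i) P)
    (φ : ℝ → ℝ)
    (hφmeas : Measurable φ)
    (hφ0 : φ 0 = 0)
    (hφnonneg : ∀ t, 0 ≤ t → 0 ≤ φ t)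
    (hφtop : Tendsto (fun t => φ t / t) atTop atTop)
    (hφint : ∀ i, Integrable (fun ω => φ (|X i ω|)) P)
    (K : ℝ)
    (hK : ∀ n : Fin d → ℕ, (∀ j, 1 ≤ n j) →
      (1 / ∏ j, (n j : ℝ)) * ∑ i ∈ Finset.Icc 1 n, ∫ ω, φ (|X i ω|) ∂P ≤ K) :
    -- Cesàro uniform integrability of {X_n}
    ∀ ε > (0 : ℝ), ∃ a : ℝ, 0 < a ∧ ∀ b ≥ a, ∀ n : Fin d → ℕ, (∀ j, 1 ≤ n j) →
      (1 / ∏ j, (n j : ℝ)) * ∑ i ∈ Finset.Icc 1 n,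
        ∫ ω, Set.indicator {ω | b < |X i ω|} (fun ω => |X i ω|) ω ∂P ≤ ε := by
  intro ε hε
  -- K is nonnegative
  have hK0 : 0 ≤ K := by
    have h1 := hK (fun _ => 1) (fun j => le_refl 1)
    have : (0:ℝ) ≤ (1 / ∏ j : Fin d, ((1:ℕ) : ℝ)) *
        ∑ i ∈ Finset.Icc 1 (fun _ : Fin d => 1), ∫ ω, φ (|X i ω|) ∂P := by
      apply mul_nonneg
      · positivity
      · apply Finset.sum_nonneg
        intro i _
        exact integral_nonneg fun ω => hφnonneg _ (abs_nonneg _)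
    linarith
  have hK1 : (0:ℝ) < K + 1 := by linarith
  -- choose threshold
  obtain ⟨a₀, ha₀⟩ := (hφtop.eventually_ge_atTop ((K + 1) / ε)).exists_forall_of_atTop
  refine ⟨max a₀ 1, lt_of_lt_of_le one_pos (le_max_right _ _), ?_⟩
  intro b hb n hn
  -- pointwise bound on each indicator integral
  have key : ∀ i : Fin d → ℕ,
      (∫ ω, Set.indicator {ω | b < |X i ω|} (fun ω => |X i ω|) ω ∂P)
        ≤ (ε / (K + 1)) * ∫ ω, φ (|X i ω|) ∂P := by
    intro i
    rw [← integral_const_mul]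
    apply integral_mono_of_nonneg
    · filter_upwards with ω
      exact Set.indicator_nonneg (fun x _ => abs_nonneg _) ω
    · exact (hφint i).const_mul _
    · filter_upwards with ω
      by_cases h : b < |X i ω|
      · rw [Set.indicator_of_mem (show ω ∈ {ω | b < |X i ω|} from h)]
        set t := |X i ω| with ht
        have hta : a₀ ≤ t := le_trans (le_trans (le_max_left _ _) hb) (le_of_lt h)
        have ht1 : (1:ℝ) ≤ t := le_trans (le_trans (le_max_right _ _) hb) (le_of_lt h)
        have htpos : (0:ℝ) < t := lt_of_lt_of_le one_pos ht1
        have h1 : (K + 1) / ε ≤ φ t / t := ha₀ t hta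
        rw [div_le_div_iff₀ hε htpos] at h1
        rw [div_mul_eq_mul_div, le_div_iff₀ hK1]
        nlinarith
      · rw [Set.indicator_of_notMem (show ω ∉ {ω | b < |X i ω|} from h)]
        exact mul_nonneg (le_of_lt (div_pos hε hK1)) (hφnonneg _ (abs_nonneg _))
  have hprod : (0:ℝ) ≤ 1 / ∏ j, (n j : ℝ) := by positivity
  calc (1 / ∏ j, (n j : ℝ)) * ∑ i ∈ Finset.Icc 1 n,
        ∫ ω, Set.indicator {ω | b < |X i ω|} (fun ω => |X i ω|) ω ∂P
      ≤ (1 / ∏ j, (n j : ℝ)) * ∑ i ∈ Finset.Icc 1 n,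
        (ε / (K + 1)) * ∫ ω, φ (|X i ω|) ∂P := by
        apply mul_le_mul_of_nonneg_left _ hprod
        exact Finset.sum_le_sum fun i _ => key i
    _ = (ε / (K + 1)) * ((1 / ∏ j, (n j : ℝ)) * ∑ i ∈ Finset.Icc 1 n,
        ∫ ω, φ (|X i ω|) ∂P) := by
        rw [← Finset.mul_sum]; ring
    _ ≤ (ε / (K + 1)) * K := by
        exact mul_le_mul_of_nonneg_left (hK n hn) (le_of_lt (div_pos hε hK1))
    _ ≤ ε := by
        rw [div_mul_eq_mul_div, div_le_iff₀ hK1]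
        nlinarith
end

section
/- (De La Vallée Poussin, necessity, for $d$-dimensional arrays.) Let $\{X_{\mathbf{n}}, \mathbf{n}\in\mathbb{Z}^d_+\}$ be a $d$-dimensional array of real random variables that is uniformly integrable in the Cesàro sense. Then there exists a measurable function $\phi:[0,\infty)\to[0,\infty)$ with $\phi(0)=0$ such that $\phi(t)/t$ is increasing, $\phi(t)/t\to\infty$ as $t\to\infty$, and $\sup_{\mathbf{n}\succ\mathbf{1}}|\mathbf{n}|^{-1}\sum_{\mathbf{i}\prec\mathbf{n}}\mathbb{E}(\phi(|X_{\mathbf{i}}|))\le 1$. -/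
open MeasureTheory Filter Finset

/-! Choose thresholds `a k → ∞` beyond which the Cesàro averages of `𝔼 |X i| 1(|X i| > a k)`
are at most `2⁻¹ / 2 ^ k`, and put `φ t = ∑ₖ (t - a k)⁺`. Each summand divided by `t` is
nondecreasing in `t` and tends to `1`, so `φ t / t` is nondecreasing and unbounded. Since
`(t - a k)⁺ ≤ t 1(t > a k)`, summing over `k` bounds the Cesàro averages of `𝔼 φ |X i|`
by `∑ₖ 2⁻¹ / 2 ^ k = 1`. -/

noncomputable def vallePoussinFun (a : ℕ → ℝ) (t : ℝ) : ℝ :=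
  ∑' k, max (t - a k) 0

section VallePoussinFun

variable {a : ℕ → ℝ}

lemma vallePoussinFun_nonneg (a : ℕ → ℝ) (t : ℝ) : 0 ≤ vallePoussinFun a t :=
  tsum_nonneg fun _ => le_max_right _ _

lemma vallePoussinFun_zero (ha0 : ∀ k, 0 ≤ a k) : vallePoussinFun a 0 = 0 := by
  simp [vallePoussinFun, ha0]

lemma summable_max_sub (ha : Tendsto a atTop atTop) (t : ℝ) :
    Summable fun k => max (t - a k) 0 := by
  obtain ⟨N, hN⟩ := eventually_atTop.1 (ha.eventually_ge_atTop t)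
  refine summable_of_ne_finset_zero (s := range N) fun k hk => ?_
  exact max_eq_right (sub_nonpos.2 (hN k (by simpa using hk)))

lemma monotone_vallePoussinFun (ha : Tendsto a atTop atTop) : Monotone (vallePoussinFun a) :=
  fun s t hst => (summable_max_sub ha s).tsum_le_tsum
    (fun _ => max_le_max (sub_le_sub_right hst _) le_rfl) (summable_max_sub ha t)

lemma monotoneOn_max_sub_div {c : ℝ} (hc : 0 ≤ c) :
    MonotoneOn (fun t => max (t - c) 0 / t) (Set.Ioi 0) := by
  intro s (hs : 0 < s) t (ht : 0 < t) hst
  dsimp only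
  rcases le_or_gt s c with hsc | hsc
  · rw [max_eq_right (by linarith), zero_div]
    exact div_nonneg (le_max_right _ _) ht.le
  · rw [max_eq_left (by linarith), max_eq_left (by linarith), div_le_div_iff₀ hs ht]
    nlinarith

lemma monotoneOn_vallePoussinFun_div (ha : Tendsto a atTop atTop) (ha0 : ∀ k, 0 ≤ a k) :
    MonotoneOn (fun t => vallePoussinFun a t / t) (Set.Ioi 0) := by
  intro s hs t ht hst
  simp only [vallePoussinFun, ← tsum_div_const]
  exact ((summable_max_sub ha s).div_const s).tsum_le_tsum
    (fun k => monotoneOn_max_sub_div (ha0 k) hs ht hst) ((summable_max_sub ha t).div_const t)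

lemma nat_mul_sub_sum_le_vallePoussinFun (ha : Tendsto a atTop atTop) (m : ℕ) (t : ℝ) :
    m * t - ∑ k ∈ range m, a k ≤ vallePoussinFun a t :=
  calc m * t - ∑ k ∈ range m, a k = ∑ k ∈ range m, (t - a k) := by
        rw [sum_sub_distrib, sum_const, card_range, nsmul_eq_mul]
    _ ≤ ∑ k ∈ range m, max (t - a k) 0 := sum_le_sum fun k _ => le_max_left _ _
    _ ≤ vallePoussinFun a t :=
        (summable_max_sub ha t).sum_le_tsum _ fun k _ => le_max_right _ _

lemma tendsto_vallePoussinFun_div_atTop (ha : Tendsto a atTop atTop) :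
    Tendsto (fun t => vallePoussinFun a t / t) atTop atTop := by
  refine tendsto_atTop.2 fun b => ?_
  obtain ⟨m, hm⟩ := exists_nat_ge (b + 1)
  set A := ∑ k ∈ range m, a k
  filter_upwards [eventually_ge_atTop (max A 1)] with t ht
  have ht0 : 0 < t := lt_of_lt_of_le one_pos (le_of_max_le_right ht)
  have hAt : A / t ≤ 1 := (div_le_one ht0).2 (le_of_max_le_left ht)
  have hlow : (m * t - A) / t ≤ vallePoussinFun a t / t :=
    div_le_div_of_nonneg_right (nat_mul_sub_sum_le_vallePoussinFun ha m t) ht0.le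
  rw [sub_div, mul_div_cancel_right₀ _ ht0.ne'] at hlow
  linarith

end VallePoussinFun

lemma indicator_setOf_lt_nonneg {α : Type*} {c : ℝ} (hc : 0 ≤ c) (f : α → ℝ) :
    0 ≤ {x | c < f x}.indicator f :=
  Set.indicator_nonneg fun _ h => hc.trans (le_of_lt h)

section Integral

variable {Ω : Type*} [MeasurableSpace Ω] {μ : Measure Ω}

lemma ofReal_integral_le_lintegral_ofReal {g : Ω → ℝ} (hg : 0 ≤ g) :
    ENNReal.ofReal (∫ ω, g ω ∂μ) ≤ ∫⁻ ω, ENNReal.ofReal (g ω) ∂μ := by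
  simpa only [Real.enorm_of_nonneg (integral_nonneg hg), Real.enorm_of_nonneg (hg _)] using
    enorm_integral_le_lintegral_enorm g (μ := μ)

lemma lintegral_ofReal_max_sub_le_integral_indicator {c : ℝ} (hc : 0 ≤ c) {f : Ω → ℝ}
    (hf : Integrable f μ) :
    ∫⁻ ω, ENNReal.ofReal (max (f ω - c) 0) ∂μ ≤
      ENNReal.ofReal (∫ ω, {ω | c < f ω}.indicator f ω ∂μ) := by
  rw [ofReal_integral_eq_lintegral_ofReal
    (hf.indicator₀ (nullMeasurableSet_lt aemeasurable_const hf.aemeasurable))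
    (Eventually.of_forall (indicator_setOf_lt_nonneg hc f))]
  refine lintegral_mono fun ω => ENNReal.ofReal_le_ofReal ?_
  by_cases h : c < f ω
  · rw [Set.indicator_of_mem (show ω ∈ {ω | c < f ω} from h)]
    exact max_le (by linarith) (hc.trans h.le)
  · rw [Set.indicator_of_notMem (show ω ∉ {ω | c < f ω} from h), max_eq_right (by linarith)]

variable {a : ℕ → ℝ}

lemma lintegral_ofReal_vallePoussinFun (ha : Tendsto a atTop atTop) {f : Ω → ℝ}
    (hf : AEMeasurable f μ) :
    ∫⁻ ω, ENNReal.ofReal (vallePoussinFun a (f ω)) ∂μ =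
      ∑' k, ∫⁻ ω, ENNReal.ofReal (max (f ω - a k) 0) ∂μ := by
  rw [← lintegral_tsum fun k => ((hf.sub_const _).max aemeasurable_const).ennreal_ofReal]
  exact lintegral_congr fun ω =>
    ENNReal.ofReal_tsum_of_nonneg (fun k => le_max_right _ _) (summable_max_sub ha _)

variable {ι : Type*} {f : ι → Ω → ℝ}

lemma sum_lintegral_ofReal_max_sub_le {c : ℝ} (hc : 0 ≤ c) (hf : ∀ i, Integrable (f i) μ)
    (S : Finset ι) :
    ∑ i ∈ S, ∫⁻ ω, ENNReal.ofReal (max (f i ω - c) 0) ∂μ ≤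
      ENNReal.ofReal (∑ i ∈ S, ∫ ω, {ω | c < f i ω}.indicator (f i) ω ∂μ) :=
  calc ∑ i ∈ S, ∫⁻ ω, ENNReal.ofReal (max (f i ω - c) 0) ∂μ
      ≤ ∑ i ∈ S, ENNReal.ofReal (∫ ω, {ω | c < f i ω}.indicator (f i) ω ∂μ) :=
        sum_le_sum fun i _ => lintegral_ofReal_max_sub_le_integral_indicator hc (hf i)
    _ = _ := (ENNReal.ofReal_sum_of_nonneg fun i _ =>
        integral_nonneg (indicator_setOf_lt_nonneg hc (f i))).symm

lemma sum_integral_vallePoussinFun_le (ha : Tendsto a atTop atTop) (ha0 : ∀ k, 0 ≤ a k)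
    (hf : ∀ i, Integrable (f i) μ) (S : Finset ι) {ε : ℕ → ℝ} (hε : Summable ε)
    (hS : ∀ k, ∑ i ∈ S, ∫ ω, {ω | a k < f i ω}.indicator (f i) ω ∂μ ≤ ε k) :
    ∑ i ∈ S, ∫ ω, vallePoussinFun a (f i ω) ∂μ ≤ ∑' k, ε k := by
  have hε0 : ∀ k, 0 ≤ ε k := fun k =>
    (sum_nonneg fun i _ => integral_nonneg (indicator_setOf_lt_nonneg (ha0 k) (f i))).trans (hS k)
  rw [← ENNReal.ofReal_le_ofReal_iff (tsum_nonneg hε0)]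
  calc ENNReal.ofReal (∑ i ∈ S, ∫ ω, vallePoussinFun a (f i ω) ∂μ)
      = ∑ i ∈ S, ENNReal.ofReal (∫ ω, vallePoussinFun a (f i ω) ∂μ) :=
        ENNReal.ofReal_sum_of_nonneg fun i _ =>
          integral_nonneg fun ω => vallePoussinFun_nonneg a (f i ω)
    _ ≤ ∑ i ∈ S, ∫⁻ ω, ENNReal.ofReal (vallePoussinFun a (f i ω)) ∂μ :=
        sum_le_sum fun i _ =>
          ofReal_integral_le_lintegral_ofReal fun ω => vallePoussinFun_nonneg a _
    _ = ∑' k, ∑ i ∈ S, ∫⁻ ω, ENNReal.ofReal (max (f i ω - a k) 0) ∂μ := by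
        simp_rw [lintegral_ofReal_vallePoussinFun ha (hf _).aemeasurable]
        exact (Summable.tsum_finsetSum fun _ _ => ENNReal.summable).symm
    _ ≤ ∑' k, ENNReal.ofReal (ε k) := ENNReal.tsum_le_tsum fun k =>
        (sum_lintegral_ofReal_max_sub_le (ha0 k) hf S).trans (ENNReal.ofReal_le_ofReal (hS k))
    _ = ENNReal.ofReal (∑' k, ε k) := (ENNReal.ofReal_tsum_of_nonneg hε0 hε).symm

end Integral

theorem de_la_vallee_poussin_necessity_general
    {Ω : Type*} [MeasurableSpace Ω]
    (P : Measure Ω)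
    (d : ℕ)
    (X : (Fin d → ℕ) → Ω → ℝ)
    (hint : ∀ i, Integrable (X i) P)
    -- Cesàro uniform integrability of {X_n}
    (hUI : ∀ ε > (0 : ℝ), ∃ a : ℝ, 0 < a ∧ ∀ b ≥ a, ∀ n : Fin d → ℕ, (∀ j, 1 ≤ n j) →
      (1 / ∏ j, (n j : ℝ)) * ∑ i ∈ Finset.Icc 1 n,
        ∫ ω, Set.indicator {ω | b < |X i ω|} (fun ω => |X i ω|) ω ∂P ≤ ε) :
    ∃ φ : ℝ → ℝ, Measurable φ ∧ φ 0 = 0 ∧ (∀ t, 0 ≤ t → 0 ≤ φ t) ∧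
      MonotoneOn (fun t => φ t / t) (Set.Ioi (0 : ℝ)) ∧
      Tendsto (fun t => φ t / t) atTop atTop ∧
      ∀ n : Fin d → ℕ, (∀ j, 1 ≤ n j) →
        (1 / ∏ j, (n j : ℝ)) * ∑ i ∈ Finset.Icc 1 n, ∫ ω, φ (|X i ω|) ∂P ≤ 1 := by
  choose c hc0 hc using fun k : ℕ => hUI (1 / 2 / 2 ^ k) (by positivity)
  set a : ℕ → ℝ := fun k => max (c k) k
  have ha : Tendsto a atTop atTop :=
    tendsto_atTop_mono (fun k => le_max_right _ _) tendsto_natCast_atTop_atTop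
  have ha0 : ∀ k, 0 ≤ a k := fun k => (hc0 k).le.trans (le_max_left _ _)
  refine ⟨vallePoussinFun a, (monotone_vallePoussinFun ha).measurable, vallePoussinFun_zero ha0,
    fun t _ => vallePoussinFun_nonneg a t, monotoneOn_vallePoussinFun_div ha ha0,
    tendsto_vallePoussinFun_div_atTop ha, fun n hn => ?_⟩
  set N := ∏ j, (n j : ℝ)
  have hN : 0 < N := prod_pos fun j _ => Nat.cast_pos.2 (hn j)
  have hbound (k : ℕ) : ∑ i ∈ Icc 1 n, ∫ ω, {ω | a k < |X i ω|}.indicator (|X i ·|) ω ∂P ≤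
      N / 2 / 2 ^ k := by
    have h := hc k (a k) (le_max_left _ _) n hn
    rw [one_div, inv_mul_le_iff₀ hN] at h
    exact h.trans_eq (by ring)
  rw [one_div, inv_mul_le_iff₀ hN, mul_one, ← tsum_geometric_two' N]
  exact sum_integral_vallePoussinFun_le ha ha0 (fun i => (hint i).abs) _
    (summable_geometric_two' N) hbound

/-- Theorem 3.2 (ii): de La Vallée Poussin necessity for Cesàro uniform integrability of
d-dimensional arrays; moreover φ can be chosen with φ(t)/t increasing. -/
theorem de_la_vallee_poussin_necessity
    {Ω : Type*} [MeasurableSpace Ω]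
    (P : Measure Ω) [IsProbabilityMeasure P]
    (d : ℕ) (hd : 0 < d)
    (X : (Fin d → ℕ) → Ω → ℝ)
    (hmeas : ∀ i, Measurable (X i))
    (hint : ∀ i, Integrable (X i) P)
    -- Cesàro uniform integrability of {X_n}
    (hUI : ∀ ε > (0 : ℝ), ∃ a : ℝ, 0 < a ∧ ∀ b ≥ a, ∀ n : Fin d → ℕ, (∀ j, 1 ≤ n j) →
      (1 / ∏ j, (n j : ℝ)) * ∑ i ∈ Finset.Icc 1 n,
        ∫ ω, Set.indicator {ω | b < |X i ω|} (fun ω => |X i ω|) ω ∂P ≤ ε) :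
    ∃ φ : ℝ → ℝ, Measurable φ ∧ φ 0 = 0 ∧ (∀ t, 0 ≤ t → 0 ≤ φ t) ∧
      MonotoneOn (fun t => φ t / t) (Set.Ioi (0 : ℝ)) ∧
      Tendsto (fun t => φ t / t) atTop atTop ∧
      ∀ n : Fin d → ℕ, (∀ j, 1 ≤ n j) →
        (1 / ∏ j, (n j : ℝ)) * ∑ i ∈ Finset.Icc 1 n, ∫ ω, φ (|X i ω|) ∂P ≤ 1 :=
  de_la_vallee_poussin_necessity_general P d X hint hUI
end

section
/- (Case $p=1$, sequence version.) Let $\{X_n, n\ge 1\}$ be a sequence of pairwise independent random vectors in a real separable Hilbert space $\mathcal{H}$ such that $\{\|X_n\|\}$ is uniformly integrable in the Cesàro sense. Then $n^{-1}\max_{1\le k\le n}\|\sum_{i=1}^k(X_i-\mathbb{E}X_i)\|\to 0$ in $L_1$ as $n\to\infty$. -/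
open MeasureTheory Filter Finset ProbabilityTheory
open scoped NNReal

/-!
Truncate at a level `a`: `X i = Y i + W i` with `‖Y i‖ ≤ a` and `‖W i‖ = ‖X i‖ 1(‖X i‖ > a)`.
The centered tails `W i - 𝔼 W i` add at most `2 n⁻¹ ∑ 𝔼 ‖W i‖` to the normalized maximum, which
Cesàro uniform integrability makes small uniformly in `n`. The centered truncations `Z i` are
bounded, and pairwise independent hence orthogonal in `L²`, so `𝔼 ‖Z 1 + ⋯ + Z k‖² ≤ 4 a² k`.
In place of a maximal inequality, compare every partial sum with the one at the multiple of `m`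
just below it: `max_{k ≤ n} ‖S_k‖ ≤ (∑_{j ≤ n/m} ‖S_{jm}‖²)^{1/2} + 2 a m`, and by Jensen the
expectation of the square root is at most `2 a n / √m`. After dividing by `n`, choose `a`, then
`m`, then `n` large.
-/

section PartialSums

variable {E : Type*} [SeminormedAddCommGroup E]

noncomputable def maxNormPartialSum (x : ℕ → E) (n : ℕ) : ℝ :=
  ((Icc 1 n).sup fun k => ‖∑ i ∈ Icc 1 k, x i‖₊ : ℝ≥0)

noncomputable def blockSumsSqNorm (x : ℕ → E) (m n : ℕ) : ℝ :=
  ∑ j ∈ Icc 1 (n / m), ‖∑ i ∈ Icc 1 (j * m), x i‖ ^ 2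

lemma maxNormPartialSum_nonneg (x : ℕ → E) (n : ℕ) : 0 ≤ maxNormPartialSum x n :=
  NNReal.coe_nonneg _

lemma norm_sum_Icc_le_maxNormPartialSum (x : ℕ → E) {k n : ℕ} (hk : k ∈ Icc 1 n) :
    ‖∑ i ∈ Icc 1 k, x i‖ ≤ maxNormPartialSum x n :=
  NNReal.coe_le_coe.2 (le_sup (f := fun k => ‖∑ i ∈ Icc 1 k, x i‖₊) hk)

lemma maxNormPartialSum_le {x : ℕ → E} {n : ℕ} {c : ℝ} (hc : 0 ≤ c)
    (h : ∀ k ∈ Icc 1 n, ‖∑ i ∈ Icc 1 k, x i‖ ≤ c) : maxNormPartialSum x n ≤ c := by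
  have : (Icc 1 n).sup (fun k => ‖∑ i ∈ Icc 1 k, x i‖₊) ≤ c.toNNReal :=
    Finset.sup_le fun k hk => by
      rw [← NNReal.coe_le_coe, coe_nnnorm, Real.coe_toNNReal _ hc]
      exact h k hk
  exact (NNReal.coe_le_coe.2 this).trans_eq (Real.coe_toNNReal _ hc)

lemma maxNormPartialSum_add_le (x y : ℕ → E) (n : ℕ) :
    maxNormPartialSum (x + y) n ≤ maxNormPartialSum x n + ∑ i ∈ Icc 1 n, ‖y i‖ := by
  refine maxNormPartialSum_le (by positivity [maxNormPartialSum_nonneg x n]) fun k hk => ?_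
  calc ‖∑ i ∈ Icc 1 k, (x + y) i‖
      ≤ ‖∑ i ∈ Icc 1 k, x i‖ + ∑ i ∈ Icc 1 k, ‖y i‖ := by
        rw [Pi.add_def, sum_add_distrib]
        exact (norm_add_le _ _).trans (add_le_add le_rfl (norm_sum_le _ _))
    _ ≤ maxNormPartialSum x n + ∑ i ∈ Icc 1 n, ‖y i‖ := by
        gcongr
        · exact norm_sum_Icc_le_maxNormPartialSum x hk
        · exact (mem_Icc.1 hk).2

lemma norm_sum_Icc_le_add {x : ℕ → E} {B : ℝ} (hx : ∀ i, ‖x i‖ ≤ B) {j k : ℕ} (hjk : j ≤ k) :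
    ‖∑ i ∈ Icc 1 k, x i‖ ≤ ‖∑ i ∈ Icc 1 j, x i‖ + (k - j : ℕ) * B := by
  have hIoc (l : ℕ) : Icc 1 l = Ioc 0 l := Icc_add_one_left_eq_Ioc 0 l
  rw [hIoc, hIoc, ← sum_Ioc_consecutive _ (Nat.zero_le j) hjk]
  refine (norm_add_le _ _).trans (add_le_add le_rfl ?_)
  calc ‖∑ i ∈ Ioc j k, x i‖ ≤ ∑ i ∈ Ioc j k, B := norm_sum_le_of_le _ fun i _ => hx i
    _ = (k - j : ℕ) * B := by rw [sum_const, Nat.card_Ioc, nsmul_eq_mul]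

lemma norm_sum_Icc_le_sqrt_blockSumsSqNorm (x : ℕ → E) {m n j : ℕ} (hj : j ≤ n / m) :
    ‖∑ i ∈ Icc 1 (j * m), x i‖ ≤ √(blockSumsSqNorm x m n) := by
  rcases Nat.eq_zero_or_pos j with rfl | hj0
  · simp
  · refine Real.le_sqrt_of_sq_le ?_
    exact single_le_sum (f := fun j => ‖∑ i ∈ Icc 1 (j * m), x i‖ ^ 2)
      (fun _ _ => sq_nonneg _) (mem_Icc.2 ⟨hj0, hj⟩)

lemma maxNormPartialSum_le_sqrt_blockSumsSqNorm_add {x : ℕ → E} {B : ℝ} (hx : ∀ i, ‖x i‖ ≤ B)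
    {m : ℕ} (hm : 0 < m) (n : ℕ) :
    maxNormPartialSum x n ≤ √(blockSumsSqNorm x m n) + m * B := by
  have hB : 0 ≤ B := (norm_nonneg _).trans (hx 0)
  refine maxNormPartialSum_le (by positivity) fun k hk => ?_
  have hkm : k / m * m ≤ k := Nat.div_mul_le_self k m
  calc ‖∑ i ∈ Icc 1 k, x i‖ ≤ ‖∑ i ∈ Icc 1 (k / m * m), x i‖ + (k - k / m * m : ℕ) * B :=
        norm_sum_Icc_le_add hx hkm
    _ ≤ √(blockSumsSqNorm x m n) + m * B := by
        gcongr
        · exact norm_sum_Icc_le_sqrt_blockSumsSqNorm x (Nat.div_le_div_right (mem_Icc.1 hk).2)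
        · have := Nat.mod_add_div' k m
          have := Nat.mod_lt k hm
          omega

end PartialSums

section Probability

variable {Ω : Type*} [MeasurableSpace Ω] {P : Measure Ω} {E : Type*} [NormedAddCommGroup E]

lemma MeasureTheory.Integrable.sqrt [IsFiniteMeasure P] {f : Ω → ℝ} (hf : Integrable f P) :
    Integrable (fun ω => √(f ω)) P := by
  refine ((integrable_const 1).add hf.abs).mono'
    (Real.continuous_sqrt.comp_aestronglyMeasurable hf.1) ?_
  refine Eventually.of_forall fun ω => ?_
  rw [Real.norm_of_nonneg (Real.sqrt_nonneg _), Pi.add_apply, Real.sqrt_le_iff]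
  constructor
  · positivity
  · nlinarith [abs_nonneg (f ω), le_abs_self (f ω)]

lemma integral_sqrt_le_sqrt_integral [IsProbabilityMeasure P] {f : Ω → ℝ} (hf : Integrable f P)
    (h0 : 0 ≤ᵐ[P] f) : ∫ ω, √(f ω) ∂P ≤ √(∫ ω, f ω ∂P) :=
  Real.strictConcaveOn_sqrt.concaveOn.le_map_integral Real.continuous_sqrt.continuousOn
    isClosed_Ici h0 hf hf.sqrt

lemma integral_norm_sub_integral_le [IsProbabilityMeasure P] [NormedSpace ℝ E] {f : Ω → E}
    (hf : Integrable f P) :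
    ∫ ω, ‖f ω - ∫ ω', f ω' ∂P‖ ∂P ≤ 2 * ∫ ω, ‖f ω‖ ∂P := by
  calc ∫ ω, ‖f ω - ∫ ω', f ω' ∂P‖ ∂P ≤ ∫ ω, (‖f ω‖ + ∫ ω', ‖f ω'‖ ∂P) ∂P :=
        integral_mono (hf.sub (integrable_const _)).norm (hf.norm.add (integrable_const _))
          fun ω => (norm_sub_le _ _).trans (add_le_add le_rfl (norm_integral_le_integral_norm _))
    _ = 2 * ∫ ω, ‖f ω‖ ∂P := by
        rw [integral_add hf.norm (integrable_const _), integral_const]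
        simp [two_mul]

lemma norm_sub_integral_le_two_mul [IsProbabilityMeasure P] [NormedSpace ℝ E] {f : Ω → E}
    {a : ℝ} (hf : ∀ ω, ‖f ω‖ ≤ a) (ω : Ω) : ‖f ω - ∫ ω', f ω' ∂P‖ ≤ 2 * a := by
  have := norm_integral_le_of_norm_le_const (μ := P) (ae_of_all _ hf)
  rw [probReal_univ, mul_one] at this
  linarith [norm_sub_le (f ω) (∫ ω', f ω' ∂P), hf ω]

lemma norm_indicator_closedBall_le {a : ℝ} (ha : 0 ≤ a) (x : E) :
    ‖(Metric.closedBall 0 a).indicator id x‖ ≤ a := by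
  by_cases h : ‖x‖ ≤ a <;> simp [h, ha]

lemma norm_indicator_compl_closedBall {a : ℝ} (x : E) :
    ‖(Metric.closedBall 0 a)ᶜ.indicator id x‖ = {y : E | a < ‖y‖}.indicator norm x := by
  by_cases h : ‖x‖ ≤ a <;> simp [Set.indicator_apply, h]

lemma MeasureTheory.Integrable.indicator_id_comp [MeasurableSpace E] [BorelSpace E]
    [SecondCountableTopology E] {f : Ω → E} (hf : Integrable f P) {s : Set E}
    (hs : MeasurableSet s) : Integrable (fun ω => s.indicator id (f ω)) P :=
  hf.mono ((measurable_id.indicator hs).comp_aemeasurable hf.aemeasurable).aestronglyMeasurable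
    (ae_of_all _ fun _ => norm_indicator_le_norm_self _ _)

lemma integrable_blockSumsSqNorm [IsFiniteMeasure P] {Z : ℕ → Ω → E} {C : ℝ}
    (hZ : ∀ i, AEStronglyMeasurable (Z i) P) (hZC : ∀ i ω, ‖Z i ω‖ ≤ C) (m n : ℕ) :
    Integrable (fun ω => blockSumsSqNorm (Z · ω) m n) P := by
  have hL2 (k : ℕ) : MemLp (fun ω => ∑ i ∈ Icc 1 k, Z i ω) 2 P :=
    memLp_finsetSum _ fun i _ => MemLp.of_bound (hZ i) C (ae_of_all _ (hZC i))
  exact integrable_finsetSum _ fun j _ => (hL2 (j * m)).integrable_norm_pow'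

variable {H : Type*} [NormedAddCommGroup H] [InnerProductSpace ℝ H] [CompleteSpace H]
  [MeasurableSpace H] [BorelSpace H]

lemma integral_norm_sum_sq_of_indepFun [IsFiniteMeasure P] {ι : Type*} {Z : ι → Ω → H}
    (hZ : ∀ i, MemLp (Z i) 2 P) (hcent : ∀ i, ∫ ω, Z i ω ∂P = 0)
    (hind : Pairwise fun i j => IndepFun (Z i) (Z j) P) (s : Finset ι) :
    ∫ ω, ‖∑ i ∈ s, Z i ω‖ ^ 2 ∂P = ∑ i ∈ s, ∫ ω, ‖Z i ω‖ ^ 2 ∂P := by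
  have hinner (i j : ι) : Integrable (fun ω => inner ℝ (Z i ω) (Z j ω)) P := by
    rcases eq_or_ne i j with rfl | hij
    · simpa only [real_inner_self_eq_norm_sq] using (hZ i).integrable_norm_pow'
    · exact (hind hij).integrable_bilin ((hZ i).integrable one_le_two)
        ((hZ j).integrable one_le_two) (innerSL ℝ)
  have hoff (i j : ι) (hij : i ≠ j) : ∫ ω, inner ℝ (Z i ω) (Z j ω) ∂P = 0 := by
    have := (hind hij).integral_bilin ((hZ i).integrable one_le_two)
      ((hZ j).integrable one_le_two) (innerSL ℝ)
    exact this.trans (by simp [hcent])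
  calc ∫ ω, ‖∑ i ∈ s, Z i ω‖ ^ 2 ∂P = ∫ ω, ∑ i ∈ s, ∑ j ∈ s, inner ℝ (Z i ω) (Z j ω) ∂P := by
        simp_rw [← real_inner_self_eq_norm_sq, sum_inner, inner_sum]
    _ = ∑ i ∈ s, ∑ j ∈ s, ∫ ω, inner ℝ (Z i ω) (Z j ω) ∂P := by
        rw [integral_finsetSum _ fun i _ => integrable_finsetSum _ fun j _ => hinner i j]
        exact sum_congr rfl fun i _ => integral_finsetSum _ fun j _ => hinner i j
    _ = ∑ i ∈ s, ∫ ω, ‖Z i ω‖ ^ 2 ∂P := by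
        refine sum_congr rfl fun i hi => ?_
        rw [sum_eq_single_of_mem i hi fun j _ hji => hoff i j hji.symm]
        simp_rw [real_inner_self_eq_norm_sq]

lemma integral_blockSumsSqNorm_le [IsProbabilityMeasure P] {Z : ℕ → Ω → H} {C : ℝ}
    (hZ : ∀ i, AEStronglyMeasurable (Z i) P) (hZC : ∀ i ω, ‖Z i ω‖ ≤ C)
    (hcent : ∀ i, ∫ ω, Z i ω ∂P = 0) (hind : Pairwise fun i j => IndepFun (Z i) (Z j) P)
    (m n : ℕ) : ∫ ω, blockSumsSqNorm (Z · ω) m n ∂P ≤ n ^ 2 * C ^ 2 / m := by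
  have hL2 (i : ℕ) : MemLp (Z i) 2 P := MemLp.of_bound (hZ i) C (ae_of_all _ (hZC i))
  have hsq (i : ℕ) : ∫ ω, ‖Z i ω‖ ^ 2 ∂P ≤ C ^ 2 := by
    calc ∫ ω, ‖Z i ω‖ ^ 2 ∂P ≤ ∫ _ω, C ^ 2 ∂P :=
          integral_mono (hL2 i).integrable_norm_pow' (integrable_const _)
            fun ω => pow_le_pow_left₀ (norm_nonneg _) (hZC i ω) 2
      _ = C ^ 2 := by simp
  have hblock (j : ℕ) (hj : j ∈ Icc 1 (n / m)) :
      ∫ ω, ‖∑ i ∈ Icc 1 (j * m), Z i ω‖ ^ 2 ∂P ≤ n * C ^ 2 := by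
    have hjm : j * m ≤ n :=
      (Nat.mul_le_mul_right m (mem_Icc.1 hj).2).trans (Nat.div_mul_le_self n m)
    rw [integral_norm_sum_sq_of_indepFun hL2 hcent hind]
    calc ∑ i ∈ Icc 1 (j * m), ∫ ω, ‖Z i ω‖ ^ 2 ∂P ≤ ∑ i ∈ Icc 1 (j * m), C ^ 2 :=
          sum_le_sum fun i _ => hsq i
      _ ≤ n * C ^ 2 := by
          rw [sum_const, Nat.card_Icc, Nat.add_sub_cancel, nsmul_eq_mul]
          gcongr
  calc ∫ ω, blockSumsSqNorm (Z · ω) m n ∂P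
      = ∑ j ∈ Icc 1 (n / m), ∫ ω, ‖∑ i ∈ Icc 1 (j * m), Z i ω‖ ^ 2 ∂P :=
        integral_finsetSum _ fun j _ =>
          (memLp_finsetSum _ fun i _ => hL2 i).integrable_norm_pow'
    _ ≤ ∑ j ∈ Icc 1 (n / m), (n * C ^ 2 : ℝ) := sum_le_sum hblock
    _ ≤ n ^ 2 * C ^ 2 / m := by
        rw [sum_const, Nat.card_Icc, Nat.add_sub_cancel, nsmul_eq_mul]
        calc ((n / m : ℕ) : ℝ) * (n * C ^ 2) ≤ (n / m : ℝ) * (n * C ^ 2) := by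
              gcongr
              exact Nat.cast_div_le
          _ = n ^ 2 * C ^ 2 / m := by ring

lemma integral_maxNormPartialSum_add_le [IsProbabilityMeasure P] {Z V : ℕ → Ω → H} {C : ℝ}
    (hZ : ∀ i, AEStronglyMeasurable (Z i) P) (hZC : ∀ i ω, ‖Z i ω‖ ≤ C)
    (hcent : ∀ i, ∫ ω, Z i ω ∂P = 0) (hind : Pairwise fun i j => IndepFun (Z i) (Z j) P)
    (hV : ∀ i, Integrable (V i) P) {m : ℕ} (hm : 0 < m) (n : ℕ) :
    ∫ ω, maxNormPartialSum (fun i => Z i ω + V i ω) n ∂P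
      ≤ C * n / √m + m * C + ∑ i ∈ Icc 1 n, ∫ ω, ‖V i ω‖ ∂P := by
  have hC : 0 ≤ C := by
    have := nonempty_of_isProbabilityMeasure P
    exact (norm_nonneg _).trans (hZC 0 (Classical.arbitrary Ω))
  have hblock := integrable_blockSumsSqNorm hZ hZC m n
  have hpt (ω : Ω) : maxNormPartialSum (fun i => Z i ω + V i ω) n
      ≤ √(blockSumsSqNorm (Z · ω) m n) + m * C + ∑ i ∈ Icc 1 n, ‖V i ω‖ :=
    (maxNormPartialSum_add_le (Z · ω) (V · ω) n).trans <|
      add_le_add (maxNormPartialSum_le_sqrt_blockSumsSqNorm_add (hZC · ω) hm n) le_rfl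
  have hsqrt : Integrable (fun ω => √(blockSumsSqNorm (Z · ω) m n) + m * C) P :=
    hblock.sqrt.add (integrable_const _)
  have hVsum : Integrable (fun ω => ∑ i ∈ Icc 1 n, ‖V i ω‖) P :=
    integrable_finsetSum _ fun i _ => (hV i).norm
  calc ∫ ω, maxNormPartialSum (fun i => Z i ω + V i ω) n ∂P
      ≤ ∫ ω, (√(blockSumsSqNorm (Z · ω) m n) + m * C + ∑ i ∈ Icc 1 n, ‖V i ω‖) ∂P :=
        integral_mono_of_nonneg (ae_of_all _ fun ω => maxNormPartialSum_nonneg _ _)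
          (hsqrt.add hVsum) (ae_of_all _ hpt)
    _ = ∫ ω, √(blockSumsSqNorm (Z · ω) m n) ∂P + m * C + ∑ i ∈ Icc 1 n, ∫ ω, ‖V i ω‖ ∂P := by
        rw [integral_add hsqrt hVsum,
          integral_add hblock.sqrt (integrable_const _), integral_const,
          integral_finsetSum _ fun i _ => (hV i).norm]
        simp
    _ ≤ √(n ^ 2 * C ^ 2 / m) + m * C + ∑ i ∈ Icc 1 n, ∫ ω, ‖V i ω‖ ∂P := by
        gcongr
        refine (integral_sqrt_le_sqrt_integral hblock (ae_of_all _ fun ω => ?_)).trans ?_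
        · exact sum_nonneg fun _ _ => sq_nonneg _
        · exact Real.sqrt_le_sqrt (integral_blockSumsSqNorm_le hZ hZC hcent hind m n)
    _ = C * n / √m + m * C + ∑ i ∈ Icc 1 n, ∫ ω, ‖V i ω‖ ∂P := by
        rw [Real.sqrt_div' _ (Nat.cast_nonneg m), ← mul_pow, Real.sqrt_sq (by positivity),
          mul_comm (n : ℝ)]

lemma integral_maxNormPartialSum_sub_integral_le [IsProbabilityMeasure P]
    [SecondCountableTopology H] {X : ℕ → Ω → H} (hint : ∀ i, Integrable (X i) P)
    (hindep : Pairwise fun i j => IndepFun (X i) (X j) P) {a : ℝ} (ha : 0 ≤ a) {m : ℕ}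
    (hm : 0 < m) (n : ℕ) :
    ∫ ω, maxNormPartialSum (fun i => X i ω - ∫ ω', X i ω' ∂P) n ∂P
      ≤ 2 * a * n / √m + m * (2 * a) +
        2 * ∑ i ∈ Icc 1 n, ∫ ω, {ω | a < ‖X i ω‖}.indicator (fun ω => ‖X i ω‖) ω ∂P := by
  set B := Metric.closedBall (0 : H) a
  have hB : MeasurableSet B := Metric.isClosed_closedBall.measurableSet
  have hY (i : ℕ) := (hint i).indicator_id_comp hB
  have hW (i : ℕ) := (hint i).indicator_id_comp hB.compl
  set Z : ℕ → Ω → H := fun i ω => B.indicator id (X i ω) - ∫ ω', B.indicator id (X i ω') ∂P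
  set V : ℕ → Ω → H := fun i ω => Bᶜ.indicator id (X i ω) - ∫ ω', Bᶜ.indicator id (X i ω') ∂P
  have hdecomp (i : ℕ) (ω : Ω) : X i ω - ∫ ω', X i ω' ∂P = Z i ω + V i ω := by
    have hX (ω : Ω) : X i ω = B.indicator id (X i ω) + Bᶜ.indicator id (X i ω) :=
      (Set.indicator_self_add_compl_apply B id (X i ω)).symm
    rw [integral_congr_ae (ae_of_all _ hX), integral_add (hY i) (hW i), hX ω]
    simp only [Z, V]
    abel
  have hZC (i : ℕ) : ∀ ω, ‖Z i ω‖ ≤ 2 * a :=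
    norm_sub_integral_le_two_mul fun ω => norm_indicator_closedBall_le ha (X i ω)
  have hZcent (i : ℕ) : ∫ ω, Z i ω ∂P = 0 := by
    simp only [Z]
    rw [integral_sub (hY i) (integrable_const _), integral_const]
    simp
  have hZind : Pairwise fun i j => IndepFun (Z i) (Z j) P := fun i j hij =>
    (hindep hij).comp ((measurable_id.indicator hB).sub_const _)
      ((measurable_id.indicator hB).sub_const _)
  calc ∫ ω, maxNormPartialSum (fun i => X i ω - ∫ ω', X i ω' ∂P) n ∂P
      = ∫ ω, maxNormPartialSum (fun i => Z i ω + V i ω) n ∂P := by simp_rw [hdecomp]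
    _ ≤ 2 * a * n / √m + m * (2 * a) + ∑ i ∈ Icc 1 n, ∫ ω, ‖V i ω‖ ∂P :=
        integral_maxNormPartialSum_add_le (fun i => ((hY i).sub (integrable_const _)).1) hZC
          hZcent hZind (fun i => (hW i).sub (integrable_const _)) hm n
    _ ≤ 2 * a * n / √m + m * (2 * a) +
        2 * ∑ i ∈ Icc 1 n, ∫ ω, {ω | a < ‖X i ω‖}.indicator (fun ω => ‖X i ω‖) ω ∂P := by
        rw [mul_sum]
        gcongr with i
        refine (integral_norm_sub_integral_le (hW i)).trans_eq ?_
        simp_rw [B, norm_indicator_compl_closedBall]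
        rfl

end Probability

theorem l1_convergence_maximal_sums_seq_general
    {Ω H : Type*} [MeasurableSpace Ω]
    [NormedAddCommGroup H] [InnerProductSpace ℝ H] [CompleteSpace H]
    [SecondCountableTopology H] [MeasurableSpace H] [BorelSpace H]
    (P : Measure Ω) [IsProbabilityMeasure P]
    (X : ℕ → Ω → H)
    (hint : ∀ i, Integrable (X i) P)
    (hindep : ∀ i j, i ≠ j → IndepFun (X i) (X j) P)
    -- Cesàro uniform integrability of {‖X_n‖}
    (hUI : ∀ ε > (0 : ℝ), ∃ a : ℝ, 0 < a ∧ ∀ b ≥ a, ∀ n : ℕ, 1 ≤ n →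
      (1 / (n : ℝ)) * ∑ i ∈ Finset.Icc 1 n,
        ∫ ω, Set.indicator {ω | b < ‖X i ω‖} (fun ω => ‖X i ω‖) ω ∂P ≤ ε) :
    Tendsto (fun n : ℕ =>
        ∫ ω, ((((Finset.Icc 1 n).sup fun k =>
            ‖∑ i ∈ Finset.Icc 1 k, (X i ω - ∫ ω', X i ω' ∂P)‖₊ : NNReal) : ℝ) /
          (n : ℝ)) ∂P)
      atTop (nhds 0) := by
  refine Metric.tendsto_atTop.2 fun ε hε => ?_
  obtain ⟨a, ha, hUIa⟩ := hUI (ε / 4) (by positivity)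
  obtain ⟨m, hm, hma⟩ : ∃ m : ℕ, 0 < m ∧ 2 * a / √m < ε / 4 :=
    ((eventually_gt_atTop 0).and ((tendsto_const_nhds.div_atTop
      (Real.tendsto_sqrt_atTop.comp tendsto_natCast_atTop_atTop)).eventually
        (gt_mem_nhds (by positivity : 0 < ε / 4)))).exists
  obtain ⟨N, hN⟩ := eventually_atTop.1 ((eventually_gt_atTop 0).and
    ((tendsto_const_div_atTop_nhds_zero_nat (2 * a * m)).eventually
      (gt_mem_nhds (by positivity : 0 < ε / 4))))
  refine ⟨N, fun n hn => ?_⟩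
  obtain ⟨hn, hnm⟩ := hN n hn
  have hn' : (0 : ℝ) < n := Nat.cast_pos.2 hn
  have htail := hUIa a le_rfl n hn
  rw [Real.dist_0_eq_abs]
  change |∫ ω, maxNormPartialSum (fun i => X i ω - ∫ ω', X i ω' ∂P) n / n ∂P| < ε
  rw [integral_div, abs_of_nonneg (div_nonneg (integral_nonneg fun ω =>
    maxNormPartialSum_nonneg _ n) hn'.le)]
  calc (∫ ω, maxNormPartialSum (fun i => X i ω - ∫ ω', X i ω' ∂P) n ∂P) / n
      ≤ (2 * a * n / √m + m * (2 * a) +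
        2 * ∑ i ∈ Icc 1 n, ∫ ω, {ω | a < ‖X i ω‖}.indicator (fun ω => ‖X i ω‖) ω ∂P) / n := by
        gcongr
        exact integral_maxNormPartialSum_sub_integral_le hint hindep ha.le hm n
    _ = 2 * a / √m + 2 * a * m / n +
        2 * (1 / n * ∑ i ∈ Icc 1 n,
          ∫ ω, {ω | a < ‖X i ω‖}.indicator (fun ω => ‖X i ω‖) ω ∂P) := by
        field_simp
    _ < ε := by linarith

/-- Sequence version (p=1): for pairwise independent Hilbert-space random vectors with
Cesàro uniformly integrable norms, the normalized maximal centered partial sums converge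
to 0 in L_1. -/
theorem l1_convergence_maximal_sums_seq
    {Ω H : Type*} [MeasurableSpace Ω]
    [NormedAddCommGroup H] [InnerProductSpace ℝ H] [CompleteSpace H]
    [SecondCountableTopology H] [MeasurableSpace H] [BorelSpace H]
    (P : Measure Ω) [IsProbabilityMeasure P]
    (X : ℕ → Ω → H)
    (hmeas : ∀ i, Measurable (X i))
    (hint : ∀ i, Integrable (X i) P)
    (hindep : ∀ i j, i ≠ j → IndepFun (X i) (X j) P)
    -- Cesàro uniform integrability of {‖X_n‖}
    (hUI : ∀ ε > (0 : ℝ), ∃ a : ℝ, 0 < a ∧ ∀ b ≥ a, ∀ n : ℕ, 1 ≤ n →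
      (1 / (n : ℝ)) * ∑ i ∈ Finset.Icc 1 n,
        ∫ ω, Set.indicator {ω | b < ‖X i ω‖} (fun ω => ‖X i ω‖) ω ∂P ≤ ε) :
    Tendsto (fun n : ℕ =>
        ∫ ω, ((((Finset.Icc 1 n).sup fun k =>
            ‖∑ i ∈ Finset.Icc 1 k, (X i ω - ∫ ω', X i ω' ∂P)‖₊ : NNReal) : ℝ) /
          (n : ℝ)) ∂P)
      atTop (nhds 0) :=
  l1_convergence_maximal_sums_seq_general P X hint hindep hUI
end
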